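/- arXiv:2506.03108 — 7 statements merged into one kernel-verified Lean document; each statement's English description precedes it below -/
import Mathlib

section
/- Let f, g : ℝ → ℝ be smooth. Suppose f'(g(0)) = 0. If g is k-vanishing (its first k derivatives vanish at t = 0), then f ∘ g is (2k+1)-vanishing (its first 2k+1 derivatives vanish at t = 0). -/
open Finset

lemma iteratedDeriv_add_top (f g : ℝ → ℝ) (hf : ContDiff ℝ (⊤ : ℕ∞) f) (hg : ContDiff ℝ (⊤ : ℕ∞) g)
    (n : ℕ) (x : ℝ) :
    iteratedDeriv n (fun y => f y + g y) x = iteratedDeriv n f x + iteratedDeriv n g x := by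
  simp only [← iteratedDerivWithin_univ]
  exact iteratedDerivWithin_add (Set.mem_univ x) uniqueDiffOn_univ
    (hf.contDiffWithinAt.of_le (by exact_mod_cast le_top)) (hg.contDiffWithinAt.of_le (by exact_mod_cast le_top))

lemma leibniz_iteratedDeriv (f g : ℝ → ℝ) (hf : ContDiff ℝ (⊤ : ℕ∞) f) (hg : ContDiff ℝ (⊤ : ℕ∞) g)
    (n : ℕ) (x : ℝ) :
    iteratedDeriv n (fun y => f y * g y) x
      = ∑ m ∈ range (n + 1),
          (n.choose m : ℝ) * iteratedDeriv m f x * iteratedDeriv (n - m) g x := by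
  induction n generalizing f g x with
  | zero => simp
  | succ n ih =>
    have hdf : ContDiff ℝ (⊤ : ℕ∞) (deriv f) := (contDiff_infty_iff_deriv.mp hf).2
    have hdg : ContDiff ℝ (⊤ : ℕ∞) (deriv g) := (contDiff_infty_iff_deriv.mp hg).2
    have hd : deriv (fun y => f y * g y) = fun y => deriv f y * g y + f y * deriv g y := by
      funext y
      exact deriv_fun_mul (hf.differentiable (by simp) y) (hg.differentiable (by simp) y)
    rw [iteratedDeriv_succ', hd]
    rw [iteratedDeriv_add_top _ _ ((hdf.mul hg)) (hf.mul hdg) n x, ih _ _ hdf hg, ih _ _ hf hdg]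
    have e1 : ∀ m, iteratedDeriv m (deriv f) x = iteratedDeriv (m + 1) f x := by
      intro m; rw [iteratedDeriv_succ']
    have e2 : ∀ m, iteratedDeriv m (deriv g) x = iteratedDeriv (m + 1) g x := by
      intro m; rw [iteratedDeriv_succ']
    simp only [e1, e2]
    -- now pure algebra on sums
    rw [Finset.sum_range_succ' (fun m => ((n+1).choose m : ℝ) * iteratedDeriv m f x *
        iteratedDeriv (n + 1 - m) g x) (n + 1)]
    rw [Finset.sum_range_succ' (fun m => ((n).choose m : ℝ) * iteratedDeriv m f x *
        iteratedDeriv (n - m + 1) g x) n]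
    have hext : ∑ m ∈ range n, ((n).choose (m+1) : ℝ) * iteratedDeriv (m+1) f x *
        iteratedDeriv (n - (m+1) + 1) g x
        = ∑ m ∈ range (n+1), ((n).choose (m+1) : ℝ) * iteratedDeriv (m+1) f x *
        iteratedDeriv (n - (m+1) + 1) g x := by
      rw [Finset.sum_range_succ, Nat.choose_succ_self]
      simp
    rw [hext, ← add_assoc]
    congr 1
    rw [← Finset.sum_add_distrib]
    · apply Finset.sum_congr rfl
      intro m hm
      have hm' : m ≤ n := Nat.lt_succ_iff.mp (Finset.mem_range.mp hm)
      rcases eq_or_lt_of_le hm' with h | h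
      · subst h
        simp [Nat.choose_succ_self]
      · have h2 : n - (m + 1) + 1 = n - m := by omega
        have h3 : n + 1 - (m + 1) = n - m := by omega
        rw [h2, h3, Nat.choose_succ_succ']
        push_cast
        ring
    · simp

/-- If `f'(g 0) = 0` and `g` is `k`-vanishing at `0`, then `f ∘ g` is `(2k+1)`-vanishing
at `0`. -/
theorem comp_two_k_add_one_vanishing (f g : ℝ → ℝ) (k : ℕ)
    (hf : ContDiff ℝ (⊤ : ℕ∞) f) (hg : ContDiff ℝ (⊤ : ℕ∞) g)
    (hf' : deriv f (g 0) = 0)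
    (hvan : ∀ i, 1 ≤ i → i ≤ k → iteratedDeriv i g 0 = 0) :
    ∀ i, 1 ≤ i → i ≤ 2 * k + 1 → iteratedDeriv i (f ∘ g) 0 = 0 := by
  have hfi : ContDiff ℝ (⊤ : ℕ∞) f := hf.of_le (by simp)
  have hgi : ContDiff ℝ (⊤ : ℕ∞) g := hg.of_le (by simp)
  have hdg : ContDiff ℝ (⊤ : ℕ∞) (deriv g) := (contDiff_infty_iff_deriv.mp hgi).2
  have hdf : ContDiff ℝ (⊤ : ℕ∞) (deriv f) := (contDiff_infty_iff_deriv.mp hfi).2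
  have hcomp : ∀ (φ : ℝ → ℝ), ContDiff ℝ (⊤ : ℕ∞) φ →
      deriv (φ ∘ g) = fun y => deriv φ (g y) * deriv g y := by
    intro φ hφ
    funext y
    exact deriv_comp y (hφ.differentiable (by simp) (g y))
      (hgi.differentiable (by simp) y)
  have hgvan : ∀ m r : ℕ, r ≤ m → m - r + 1 ≤ k → iteratedDeriv (m - r) (deriv g) 0 = 0 := by
    intro m r _ h
    rw [← iteratedDeriv_succ']
    exact hvan (m - r + 1) (by omega) h
  have hA : ∀ (φ : ℝ → ℝ), ContDiff ℝ (⊤ : ℕ∞) φ → ∀ j, 1 ≤ j → j ≤ k →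
      iteratedDeriv j (φ ∘ g) 0 = 0 := by
    intro φ hφ j hj1 hjk
    obtain ⟨m, rfl⟩ : ∃ m, j = m + 1 := ⟨j - 1, by omega⟩
    have hdφ : ContDiff ℝ (⊤ : ℕ∞) (deriv φ) := (contDiff_infty_iff_deriv.mp hφ).2
    have hφg : ContDiff ℝ (⊤ : ℕ∞) (fun y => deriv φ (g y)) := hdφ.comp hgi
    rw [iteratedDeriv_succ', hcomp φ hφ,
      leibniz_iteratedDeriv (fun y => deriv φ (g y)) (deriv g) hφg hdg m 0]
    apply Finset.sum_eq_zero
    intro r hr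
    have hr' : r ≤ m := Nat.lt_succ_iff.mp (Finset.mem_range.mp hr)
    rw [hgvan m r hr' (by omega)]
    ring
  intro i hi1 hi2
  obtain ⟨m, rfl⟩ : ∃ m, i = m + 1 := ⟨i - 1, by omega⟩
  have hm : m ≤ 2 * k := by omega
  have hfg : ContDiff ℝ (⊤ : ℕ∞) (fun y => deriv f (g y)) := hdf.comp hgi
  rw [iteratedDeriv_succ', hcomp f hfi,
    leibniz_iteratedDeriv (fun y => deriv f (g y)) (deriv g) hfg hdg m 0]
  apply Finset.sum_eq_zero
  intro r hr
  have hr' : r ≤ m := Nat.lt_succ_iff.mp (Finset.mem_range.mp hr)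
  by_cases hcase : m - r + 1 ≤ k
  · rw [hgvan m r hr' hcase]; ring
  · have hrk : r ≤ k := by omega
    have : iteratedDeriv r (fun y => deriv f (g y)) 0 = 0 := by
      rcases Nat.eq_zero_or_pos r with h0 | h1
      · subst h0; simpa using hf'
      · have := hA (deriv f) hdf r h1 hrk
        simpa [Function.comp_def] using this
    rw [this]
    ring
end

section
/- Let f, g : ℝ → ℝ be smooth with f'(g(0)) = 0. If g is (k−1)-vanishing, then the 2k-th derivative of f ∘ g at 0 satisfies (1/(2k)!) · (f∘g)^{(2k)}(0) = (1/(2·(k!)^2)) · f''(g(0)) · (g^{(k)}(0))^2. -/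
open scoped ContDiff


private lemma infty_le : (1 : WithTop ℕ∞) ≤ ∞ := by exact_mod_cast le_top

private lemma sd {u : ℝ → ℝ} (hu : ContDiff ℝ ∞ u) : ContDiff ℝ ∞ (deriv u) :=
  (contDiff_infty_iff_deriv.mp hu).2

private lemma itd_add {u v : ℝ → ℝ} (hu : ContDiff ℝ ∞ u) (hv : ContDiff ℝ ∞ v)
    (n : ℕ) (x : ℝ) :
    iteratedDeriv n (fun y => u y + v y) x = iteratedDeriv n u x + iteratedDeriv n v x := by
  have := iteratedDerivWithin_add (Set.mem_univ x) uniqueDiffOn_univ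
    ((hu.of_le (by exact_mod_cast le_top : ((n:ℕ∞) : WithTop ℕ∞) ≤ ∞)).contDiffWithinAt)
    ((hv.of_le (by exact_mod_cast le_top : ((n:ℕ∞) : WithTop ℕ∞) ≤ ∞)).contDiffWithinAt)
  simpa [iteratedDerivWithin_univ, Pi.add_def] using this

private lemma deriv_mul_fun {u v : ℝ → ℝ} (hu : ContDiff ℝ ∞ u) (hv : ContDiff ℝ ∞ v) :
    deriv (fun x => u x * v x) = fun x => deriv u x * v x + u x * deriv v x := by
  funext x
  exact deriv_fun_mul ((hu.differentiable (by simp)) x) ((hv.differentiable (by simp)) x)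

/-- If all derivatives of `u` of order `< m` vanish at `0`, so do those of `u * v`. -/
private lemma fact1 : ∀ (m : ℕ) (u v : ℝ → ℝ), ContDiff ℝ ∞ u → ContDiff ℝ ∞ v →
    (∀ i < m, iteratedDeriv i u 0 = 0) →
    ∀ n < m, iteratedDeriv n (fun x => u x * v x) 0 = 0 := by
  intro m
  induction m with
  | zero => intro u v _ _ _ n hn; omega
  | succ m IH =>
    intro u v hu hv hW n hn
    match n with
    | 0 =>
      have h0 := hW 0 (Nat.succ_pos m)
      rw [iteratedDeriv_zero] at h0 ⊢
      simp only [h0, zero_mul]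
    | (s+1) =>
      rw [iteratedDeriv_succ', deriv_mul_fun hu hv,
        itd_add ((sd hu).mul hv) (hu.mul (sd hv)) s 0,
        IH (deriv u) v (sd hu) hv
          (fun i hi => by rw [← iteratedDeriv_succ']; exact hW (i+1) (by omega)) s (by omega),
        IH u (deriv v) hu (sd hv) (fun i hi => hW i (by omega)) s (by omega), add_zero]


private lemma factQ : ∀ (N a b : ℕ) (u v : ℝ → ℝ), a + b = N →
    ContDiff ℝ ∞ u → ContDiff ℝ ∞ v →
    (∀ i < a, iteratedDeriv i u 0 = 0) → (∀ i < b, iteratedDeriv i v 0 = 0) →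
    iteratedDeriv (a + b) (fun x => u x * v x) 0 =
      ((a + b).choose a : ℝ) * iteratedDeriv a u 0 * iteratedDeriv b v 0 := by
  intro N
  induction N with
  | zero =>
    intro a b u v hab hu hv _ _
    obtain ⟨rfl, rfl⟩ : a = 0 ∧ b = 0 := by omega
    simp
  | succ N IH =>
    intro a b u v hab hu hv hWu hWv
    match a, b, hab with
    | 0, b, hab =>
      obtain rfl : b = N + 1 := by omega
      simp only [Nat.zero_add, Nat.choose_zero_right, Nat.cast_one, one_mul, iteratedDeriv_zero]
      rw [iteratedDeriv_succ', deriv_mul_fun hu hv,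
        itd_add ((sd hu).mul hv) (hu.mul (sd hv)) N 0]
      have h1 : iteratedDeriv N (fun x => deriv u x * v x) 0 = 0 := by
        have e : (fun x => deriv u x * v x) = (fun x => v x * deriv u x) := by
          funext x; ring
        rw [e]
        exact fact1 (N+1) v (deriv u) hv (sd hu) hWv N (lt_add_one N)
      have h2 := IH 0 N u (deriv v) (by omega) hu (sd hv) hWu
        (fun i hi => by rw [← iteratedDeriv_succ']; exact hWv (i+1) (by omega))
      simp only [Nat.zero_add, Nat.choose_zero_right, Nat.cast_one, one_mul,
        iteratedDeriv_zero] at h2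
      rw [h1, h2, zero_add, ← iteratedDeriv_succ']
    | (a'+1), b, hab =>
      rw [show a' + 1 + b = N + 1 from hab, iteratedDeriv_succ', deriv_mul_fun hu hv,
        itd_add ((sd hu).mul hv) (hu.mul (sd hv)) N 0]
      have h1 := IH a' b (deriv u) v (by omega) (sd hu) hv
        (fun i hi => by rw [← iteratedDeriv_succ']; exact hWu (i+1) (by omega)) hWv
      rw [show a' + b = N from by omega] at h1
      rw [show iteratedDeriv a' (deriv u) 0 = iteratedDeriv (a'+1) u 0 from by
        rw [← iteratedDeriv_succ']] at h1
      match b with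
      | 0 =>
        have h2 : iteratedDeriv N (fun x => u x * deriv v x) 0 = 0 :=
          fact1 (a'+1) u (deriv v) hu (sd hv) hWu N (by omega)
        rw [h1, h2, add_zero]
        have : a' = N := by omega
        subst this
        simp [Nat.choose_self]
      | (b'+1) =>
        have h2 := IH (a'+1) b' u (deriv v) (by omega) hu (sd hv) hWu
          (fun i hi => by rw [← iteratedDeriv_succ']; exact hWv (i+1) (by omega))
        rw [show a' + 1 + b' = N from by omega] at h2
        rw [show iteratedDeriv b' (deriv v) 0 = iteratedDeriv (b'+1) v 0 from by
          rw [← iteratedDeriv_succ']] at h2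
        rw [h1, h2]
        have hch : (((N+1)).choose (a'+1) : ℝ)
            = (N.choose a' : ℝ) + (N.choose (a'+1) : ℝ) := by
          rw [show (N+1).choose (a'+1) = N.choose a' + N.choose (a'+1) from
            Nat.choose_succ_succ N a']
          push_cast; ring
        rw [hch]; ring


private lemma factB (a b : ℕ) (u v : ℝ → ℝ) (hu : ContDiff ℝ ∞ u) (hv : ContDiff ℝ ∞ v)
    (hWu : ∀ i < a, iteratedDeriv i u 0 = 0) (hWv : ∀ i < b, iteratedDeriv i v 0 = 0) :
    ∀ n < a + b, iteratedDeriv n (fun x => u x * v x) 0 = 0 := by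
  intro n hn
  have h := factQ n (min a n) (n - min a n) u v (by omega) hu hv
    (fun i hi => hWu i (by omega)) (fun i hi => hWv i (by omega))
  rw [show min a n + (n - min a n) = n from by omega] at h
  rw [h]
  rcases le_or_gt a n with hle | hlt
  · have hv0 : iteratedDeriv (n - min a n) v 0 = 0 := hWv _ (by omega)
    rw [hv0]; ring
  · have hu0 : iteratedDeriv (min a n) u 0 = 0 := hWu _ (by omega)
    rw [hu0]; ring

private lemma factD (k : ℕ) (u : ℝ → ℝ) (hu : ContDiff ℝ ∞ u)
    (hWu : ∀ i < k, iteratedDeriv i u 0 = 0) :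
    ∀ (m : ℕ) (F : ℝ → ℝ), ContDiff ℝ ∞ F → (∀ j < m, iteratedDeriv j F 0 = 0) →
    ∀ n < m * k, iteratedDeriv n (fun x => F (u x)) 0 = 0 := by
  intro m
  induction m with
  | zero => intro F _ _ n hn; omega
  | succ m IH =>
    intro F hF hWF n hn
    have hk : 1 ≤ k := by
      rcases Nat.eq_zero_or_pos k with rfl | h
      · simp at hn
      · exact h
    have hmk : (m + 1) * k = m * k + k := by ring
    have hu0 : u 0 = 0 := by
      have := hWu 0 hk
      rwa [iteratedDeriv_zero] at this
    match n with
    | 0 =>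
      have h0 := hWF 0 (by omega)
      rw [iteratedDeriv_zero] at h0 ⊢
      simp [hu0, h0]
    | (s+1) =>
      rw [iteratedDeriv_succ']
      have hd : deriv (fun x => F (u x)) = fun x => deriv F (u x) * deriv u x := by
        funext x
        exact deriv_comp x ((hF.differentiable (by simp)) (u x))
          ((hu.differentiable (by simp)) x)
      rw [hd]
      exact factB (m * k) (k - 1) (fun x => deriv F (u x)) (deriv u)
        ((sd hF).comp hu) (sd hu)
        (IH (deriv F) (sd hF)
          (fun j hj => by rw [← iteratedDeriv_succ']; exact hWF (j+1) (by omega)))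
        (fun i hi => by rw [← iteratedDeriv_succ']; exact hWu (i+1) (by omega))
        s (by omega)


private lemma natle (n : ℕ) : ((n : ℕ) : WithTop ℕ∞) ≤ ∞ := by
  exact_mod_cast (le_top : ((n : ℕ) : ℕ∞) ≤ ⊤)

/-- If `f'(g 0) = 0` and `g` is `(k-1)`-vanishing at `0`, then
`(1/(2k)!) (f∘g)^{(2k)}(0) = (1/(2 (k!)²)) f''(g 0) (g^{(k)}(0))²`. -/
theorem comp_two_k_deriv_formula (f g : ℝ → ℝ) (k : ℕ) (hk : 1 ≤ k)
    (hf : ContDiff ℝ (⊤ : ℕ∞) f) (hg : ContDiff ℝ (⊤ : ℕ∞) g)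
    (hf' : deriv f (g 0) = 0)
    (hvan : ∀ i, 1 ≤ i → i ≤ k - 1 → iteratedDeriv i g 0 = 0) :
    (1 / (Nat.factorial (2 * k) : ℝ)) * iteratedDeriv (2 * k) (f ∘ g) 0 =
      (1 / (2 * ((Nat.factorial k : ℝ)) ^ 2)) * iteratedDeriv 2 f (g 0) *
        (iteratedDeriv k g 0) ^ 2 := by
  have hfi : ContDiff ℝ ∞ f := hf.of_le (by simp)
  have hgi : ContDiff ℝ ∞ g := hg.of_le (by simp)
  set p : ℝ := g 0 with hp
  set A : ℝ := iteratedDeriv 2 f p / 2 with hA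
  set h : ℝ → ℝ := fun x => g x - p with hh
  set F : ℝ → ℝ := fun t => f (p + t) - (f p + A * t ^ 2) with hFdef
  have hhs : ContDiff ℝ ∞ h := hgi.sub contDiff_const
  have hFs : ContDiff ℝ ∞ F := by
    apply ContDiff.sub
    · exact hfi.comp (contDiff_const.add contDiff_id)
    · exact contDiff_const.add (contDiff_const.mul (contDiff_id.pow 2))
  -- h vanishes to order k at 0
  have hW : ∀ i < k, iteratedDeriv i h 0 = 0 := by
    intro i hi
    match i with
    | 0 => rw [iteratedDeriv_zero]; simp [hh, hp]
    | (j+1) =>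
      have ed : deriv h = deriv g := by
        funext x
        rw [hh]
        exact deriv_sub_const (𝕜 := ℝ) (f := g) (x := x) p
      have e : iteratedDeriv (j+1) h = iteratedDeriv (j+1) g := by
        rw [iteratedDeriv_succ', iteratedDeriv_succ', ed]
      rw [e]
      exact hvan (j+1) (by omega) (by omega)
  -- the k-th derivatives of h and g agree
  have hkg : iteratedDeriv k h 0 = iteratedDeriv k g 0 := by
    obtain ⟨j, rfl⟩ : ∃ j, k = j + 1 := ⟨k - 1, by omega⟩
    have ed : deriv h = deriv g := by
      funext x
      rw [hh]
      exact deriv_sub_const (𝕜 := ℝ) (f := g) (x := x) p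
    rw [iteratedDeriv_succ', iteratedDeriv_succ', ed]
  -- F vanishes to order 3 at 0
  have hF0 : F 0 = 0 := by rw [hFdef]; simp
  have hderivF : deriv F = fun t => deriv f (p + t) - A * (2 * t) := by
    funext t
    have d1 : DifferentiableAt ℝ (fun s : ℝ => f (p + s)) t :=
      ((hfi.differentiable (by simp)).comp
        (differentiable_id.const_add p)) t
    have d2 : DifferentiableAt ℝ (fun s : ℝ => f p + A * s ^ 2) t :=
      (((differentiable_pow 2).const_mul A).const_add (f p)) t
    rw [hFdef]
    rw [deriv_fun_sub d1 d2, deriv_comp_const_add, deriv_const_add,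
      deriv_const_mul _ ((differentiable_pow 2) t), deriv_pow_field]
    norm_num
  have hF1 : deriv F 0 = 0 := by
    rw [hderivF]
    simp [hf']
  have hF2 : iteratedDeriv 2 F 0 = 0 := by
    rw [show (2:ℕ) = 1 + 1 from rfl, iteratedDeriv_succ, iteratedDeriv_one, hderivF]
    have d1 : DifferentiableAt ℝ (fun s : ℝ => deriv f (p + s)) 0 :=
      (((contDiff_infty_iff_deriv.mp hfi).2.differentiable (by simp)).comp
        (differentiable_id.const_add p)) 0
    have d2 : DifferentiableAt ℝ (fun s : ℝ => A * (2 * s)) 0 :=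
      ((differentiable_id.const_mul 2).const_mul A) 0
    rw [deriv_fun_sub d1 d2, deriv_comp_const_add, deriv_const_mul _ (differentiable_id.const_mul 2 0),
      deriv_const_mul _ differentiable_id.differentiableAt, deriv_id'']
    have e2 : deriv (deriv f) (p + 0) = iteratedDeriv 2 f p := by
      rw [show (2:ℕ) = 1 + 1 from rfl, iteratedDeriv_succ, iteratedDeriv_one, add_zero]
    rw [e2, hA]
    ring
  have hWF : ∀ j < 3, iteratedDeriv j F 0 = 0 := by
    intro j hj
    interval_cases j
    · rw [iteratedDeriv_zero]; exact hF0
    · rw [iteratedDeriv_one]; exact hF1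
    · exact hF2
  -- the decomposition f ∘ g = (f p + A h²) + F ∘ h
  have hid : f ∘ g = fun x => (f p + A * (h x * h x)) + F (h x) := by
    funext x
    have e1 : p + (g x - p) = g x := by ring
    simp only [Function.comp_apply, hFdef, hh, e1]
    ring
  have hsplit : iteratedDeriv (2*k) (fun x => (f p + A * (h x * h x)) + F (h x)) 0
      = iteratedDeriv (2*k) (fun x => f p + A * (h x * h x)) 0
        + iteratedDeriv (2*k) (fun x => F (h x)) 0 := by
    have := itd_add (u := fun x => f p + A * (h x * h x)) (v := fun x => F (h x))
      (contDiff_const.add (contDiff_const.mul (hhs.mul hhs))) (hFs.comp hhs) (2*k) 0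
    simpa using this
  rw [hid, hsplit]
  -- third piece vanishes
  have h3 : iteratedDeriv (2*k) (fun x => F (h x)) 0 = 0 :=
    factD k h hhs hW 3 F hFs hWF (2*k) (by omega)
  -- first piece
  have h1 : iteratedDeriv (2*k) (fun x => f p + A * (h x * h x)) 0
      = A * iteratedDeriv (2*k) (fun x => h x * h x) 0 := by
    rw [← iteratedDerivWithin_univ, ← iteratedDerivWithin_univ]
    rw [iteratedDerivWithin_const_add (by omega : 0 < 2*k)]
    exact iteratedDerivWithin_const_mul (Set.mem_univ 0) uniqueDiffOn_univ A
      (((hhs.mul hhs).of_le (natle (2*k))).contDiffWithinAt)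
  have h2 : iteratedDeriv (2*k) (fun x => h x * h x) 0
      = ((2*k).choose k : ℝ) * iteratedDeriv k g 0 * iteratedDeriv k g 0 := by
    have := factQ (k+k) k k h h rfl hhs hhs hW hW
    rw [show k + k = 2*k from by ring, hkg] at this
    exact this
  rw [h3, h1, h2, add_zero]
  have hcast : ((2*k).choose k : ℝ) * (Nat.factorial k : ℝ) * (Nat.factorial k : ℝ)
      = (Nat.factorial (2*k) : ℝ) := by
    have := Nat.choose_mul_factorial_mul_factorial (show k ≤ 2*k by omega)
    rw [show 2*k - k = k from by omega] at this
    exact_mod_cast this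
  have hchoose : ((2*k).choose k : ℝ)
      = ((2*k).factorial : ℝ) / ((k.factorial : ℝ) * (k.factorial : ℝ)) := by
    rw [eq_div_iff (by positivity)]
    rw [← hcast]; ring
  -- final arithmetic
  have hfac : (0:ℝ) < (Nat.factorial (2*k) : ℝ) := by
    exact_mod_cast Nat.factorial_pos (2*k)
  have hfack : (0:ℝ) < (Nat.factorial k : ℝ) := by exact_mod_cast Nat.factorial_pos k
  rw [hA, hchoose]
  field_simp
end

section
/- Let E : ℝᴺ → ℝ be smooth with a local minimum at p, and let p(t) be an analytic trajectory at p which is j-active (first j−1 derivatives of p(t) vanish at 0 but the j-th does not) and along which E(p(t)) − E(p) has vanishing derivatives at 0 through order 2k. Then E grows sometimes-s-slowly at p with s = (2k+2)/j: there exist constants c > 0 and δ > 0 such that E(p(t)) − E(p) ≤ c·|p(t) − p|^{(2k+2)/j} for all t ∈ [0,δ]. -/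
open Set Finset Topology

/-- On a closed interval inside an open set where `g` is smooth, the iterated derivative within
the interval agrees with the global iterated derivative. -/
private lemma iteratedDerivWithin_Icc_eq {F : Type*} [NormedAddCommGroup F] [NormedSpace ℝ F]
    {g : ℝ → F} {U : Set ℝ} (hU : IsOpen U) (hg : ContDiffOn ℝ (⊤ : ℕ∞) g U)
    {a b : ℝ} (hab : a < b) (hsub : Set.Icc a b ⊆ U) (i : ℕ) {x : ℝ} (hx : x ∈ Set.Icc a b) :
    iteratedDerivWithin i g (Set.Icc a b) x = iteratedDeriv i g x := by
  have h1 := hg.ftaylorSeriesWithin hU.uniqueDiffOn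
  have h2 := h1.mono hsub
  have h3 := h2.eq_iteratedFDerivWithin_of_uniqueDiffOn (m := i) (by exact_mod_cast le_top) (uniqueDiffOn_Icc hab) hx
  have h4 : ftaylorSeriesWithin ℝ g U x i = iteratedFDeriv ℝ i g x := by
    have h5 : ftaylorSeriesWithin ℝ g U x i = iteratedFDerivWithin ℝ i g U x := rfl
    rw [h5, iteratedFDerivWithin_of_isOpen i hU (hsub hx)]
  rw [iteratedDerivWithin_eq_iteratedFDerivWithin, ← h3, h4,
    ← iteratedDeriv_eq_iteratedFDeriv]

/-- One-sided Taylor estimate with global iterated derivatives at `0`. -/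
private lemma exists_taylor_bound {F : Type*} [NormedAddCommGroup F] [NormedSpace ℝ F]
    {g : ℝ → F} {U : Set ℝ} (hU : IsOpen U) (h0 : (0:ℝ) ∈ U) (hg : ContDiffOn ℝ (⊤ : ℕ∞) g U)
    (n : ℕ) :
    ∃ δ > (0:ℝ), ∃ M : ℝ, 0 ≤ M ∧ ∀ t ∈ Set.Icc (0:ℝ) δ,
      ‖g t - ∑ i ∈ Finset.range (n+1), ((i.factorial : ℝ)⁻¹ * t ^ i) • iteratedDeriv i g 0‖
        ≤ M * t ^ (n+1) := by
  obtain ⟨ε, hε, hball⟩ := Metric.isOpen_iff.mp hU 0 h0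
  have hδ : 0 < ε/2 := half_pos hε
  have hsub : Set.Icc (0:ℝ) (ε/2) ⊆ U := by
    intro x hx
    apply hball
    rw [Metric.mem_ball, Real.dist_eq, sub_zero, abs_of_nonneg hx.1]
    linarith [hx.2]
  obtain ⟨C, hC⟩ := exists_taylor_mean_remainder_bound (le_of_lt hδ)
      ((hg.mono hsub).of_le (by exact_mod_cast le_top)) (n := n)
  refine ⟨ε/2, hδ, max C 0, le_max_right _ _, fun t ht => ?_⟩
  have h1 := hC t ht
  rw [taylor_within_apply] at h1
  have h2 : ∀ i ∈ Finset.range (n+1),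
      ((i.factorial : ℝ)⁻¹ * (t - 0) ^ i) • iteratedDerivWithin i g (Set.Icc 0 (ε/2)) 0
      = ((i.factorial : ℝ)⁻¹ * t ^ i) • iteratedDeriv i g 0 := by
    intro i _
    rw [iteratedDerivWithin_Icc_eq hU hg hδ hsub i (Set.left_mem_Icc.mpr (le_of_lt hδ)),
      sub_zero]
  rw [Finset.sum_congr rfl h2, sub_zero] at h1
  exact h1.trans (mul_le_mul_of_nonneg_right (le_max_left _ _) (pow_nonneg ht.1 _))

/-- Evaluation of the Taylor sum when derivatives of orders `1,…,m-1` vanish at `0`. -/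
private lemma taylor_sum_eval {F : Type*} [NormedAddCommGroup F] [NormedSpace ℝ F]
    (g : ℝ → F) (m : ℕ) (hm : 1 ≤ m) (t : ℝ)
    (hvan : ∀ i, 1 ≤ i → i < m → iteratedDeriv i g 0 = 0) :
    ∑ i ∈ Finset.range (m+1), ((i.factorial : ℝ)⁻¹ * t ^ i) • iteratedDeriv i g 0
      = g 0 + ((m.factorial : ℝ)⁻¹ * t ^ m) • iteratedDeriv m g 0 := by
  rw [Finset.sum_range_succ]
  congr 1
  obtain ⟨m', rfl⟩ : ∃ m', m = m' + 1 := ⟨m - 1, (Nat.succ_pred_eq_of_pos hm).symm⟩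
  rw [Finset.sum_range_succ']
  have hz : ∑ i ∈ Finset.range m',
      ((Nat.factorial (i+1) : ℝ)⁻¹ * t ^ (i+1)) • iteratedDeriv (i+1) g 0 = 0 := by
    apply Finset.sum_eq_zero
    intro i hi
    rw [hvan (i+1) (Nat.le_add_left 1 i) (by simpa using Finset.mem_range.mp hi), smul_zero]
  rw [hz, zero_add]
  simp [iteratedDeriv_zero]

set_option maxHeartbeats 1000000 in
/-- If `E` has a local minimum at `p 0`, the trajectory `p` is `j`-active, and
`t ↦ E (p t) - E (p 0)` has vanishing derivatives at `0` through order `2k`, then `E` grows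
sometimes-`s`-slowly at `p 0` with `s = (2k+2)/j`. -/
theorem grows_sometimes_slowly_of_Eflex (N j k : ℕ) (hj : 1 ≤ j)
    (E : EuclideanSpace ℝ (Fin N) → ℝ) (hE : ContDiff ℝ (⊤ : ℕ∞) E)
    (p : ℝ → EuclideanSpace ℝ (Fin N)) (hp : AnalyticAt ℝ p 0)
    (hmin : IsLocalMin E (p 0))
    (hvan' : ∀ i, 1 ≤ i → i < j → iteratedDeriv i p 0 = 0)
    (hact : iteratedDeriv j p 0 ≠ 0)
    (hEvan : ∀ i, 1 ≤ i → i ≤ 2 * k → iteratedDeriv i (fun t => E (p t)) 0 = 0) :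
    ∃ c > (0 : ℝ), ∃ δ > (0 : ℝ), ∀ t ∈ Set.Icc (0 : ℝ) δ,
      E (p t) - E (p 0) ≤ c * ‖p t - p 0‖ ^ ((2 * (k : ℝ) + 2) / (j : ℝ)) := by
  have hjR : (j:ℝ) ≠ 0 := Nat.cast_ne_zero.mpr (by omega)
  set s : ℝ := (2 * (k : ℝ) + 2) / (j : ℝ) with hs_def
  have hs0 : 0 ≤ s := by positivity
  -- an open neighbourhood of 0 where everything is smooth
  obtain ⟨U, hUf, hUopen, hU0⟩ := eventually_nhds_iff.mp hp.eventually_analyticAt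
  have hpU : ContDiffOn ℝ (⊤ : ℕ∞) p U := fun x hx => ((hUf x hx).contDiffAt).contDiffWithinAt
  have hgU : ContDiffOn ℝ (⊤ : ℕ∞) (fun t => E (p t)) U := hE.comp_contDiffOn hpU
  set U' : Set ℝ := (fun u : ℝ => -u) ⁻¹' U with hU'
  have hU'open : IsOpen U' := hUopen.preimage continuous_neg
  have hU'0 : (0:ℝ) ∈ U' := by simpa [hU'] using hU0
  have hqU : ContDiffOn ℝ (⊤ : ℕ∞) (fun u : ℝ => E (p (-u))) U' :=
    hgU.comp contDiff_neg.contDiffOn (fun x hx => hx)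
  -- Taylor bounds
  obtain ⟨δ₁, hδ₁, M₁, hM₁0, hb₁⟩ := exists_taylor_bound hUopen hU0 hgU (2*k+1)
  obtain ⟨δ₂, hδ₂, M₂, hM₂0, hb₂⟩ := exists_taylor_bound hU'open hU'0 hqU (2*k+1)
  obtain ⟨δ₃, hδ₃, M₃, hM₃0, hb₃⟩ := exists_taylor_bound hUopen hU0 hpU j
  set D : ℝ := iteratedDeriv (2*k+1) (fun t => E (p t)) 0 with hD
  set c : ℝ := ((2*k+1).factorial : ℝ)⁻¹ * D with hc_def
  set a := iteratedDeriv j p 0 with ha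
  -- vanishing hypotheses
  have hvanE : ∀ i, 1 ≤ i → i < 2*k+1 → iteratedDeriv i (fun t => E (p t)) 0 = 0 :=
    fun i h1 h2 => hEvan i h1 (by omega)
  have hvanq : ∀ i, 1 ≤ i → i < 2*k+1 → iteratedDeriv i (fun u : ℝ => E (p (-u))) 0 = 0 := by
    intro i h1 h2
    have h := iteratedDeriv_comp_neg i (fun t => E (p t)) (0:ℝ)
    rw [neg_zero] at h
    rw [h, hEvan i h1 (by omega), smul_zero]
  have hqtop : iteratedDeriv (2*k+1) (fun u : ℝ => E (p (-u))) 0 = -D := by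
    have h := iteratedDeriv_comp_neg (2*k+1) (fun t => E (p t)) (0:ℝ)
    rw [neg_zero] at h
    rw [h, ← hD, Odd.neg_one_pow ⟨k, by ring⟩, neg_one_smul]
  -- Taylor bound for E ∘ p in explicit form
  have hb₁' : ∀ t ∈ Set.Icc (0:ℝ) δ₁,
      E (p t) - E (p 0) - c * t ^ (2*k+1) ≤ M₁ * t ^ (2*k+2) := by
    intro t ht
    have h := hb₁ t ht
    rw [taylor_sum_eval _ _ (by omega) _ hvanE] at h
    rw [Real.norm_eq_abs] at h
    have h' := (abs_le.mp h).2
    have key : ((2*k+1).factorial : ℝ)⁻¹ * t ^ (2*k+1) * D = c * t ^ (2*k+1) := by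
      rw [hc_def]; ring
    simp only [smul_eq_mul] at h'
    nlinarith [key]
  -- Taylor bound for the reversed trajectory
  have hb₂' : ∀ u ∈ Set.Icc (0:ℝ) δ₂,
      E (p (-u)) - E (p 0) + c * u ^ (2*k+1) ≤ M₂ * u ^ (2*k+2) := by
    intro u hu
    have h := hb₂ u hu
    rw [taylor_sum_eval _ _ (by omega) _ hvanq] at h
    rw [hqtop, Real.norm_eq_abs] at h
    have h' := (abs_le.mp h).2
    have key : ((2*k+1).factorial : ℝ)⁻¹ * u ^ (2*k+1) * D = c * u ^ (2*k+1) := by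
      rw [hc_def]; ring
    simp only [smul_eq_mul, mul_neg] at h'
    nlinarith [key]
  -- local minimum along the trajectory
  have hminE : ∀ᶠ x in 𝓝 (p 0), E (p 0) ≤ E x := hmin
  obtain ⟨δ₄, hδ₄, hmin4⟩ := Metric.eventually_nhds_iff.mp (hp.continuousAt.eventually hminE)
  -- the top coefficient is nonpositive
  have hc0 : c ≤ 0 := by
    by_contra hc
    push_neg at hc
    set u := min (min δ₂ (δ₄/2)) (c/(2*(M₂+1))) with hu_def
    have hu0 : 0 < u := lt_min (lt_min hδ₂ (by linarith)) (by positivity)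
    have hu2 : u ≤ δ₂ := (min_le_left _ _).trans (min_le_left _ _)
    have hu4 : dist (-u) 0 < δ₄ := by
      rw [Real.dist_eq, sub_zero, abs_neg, abs_of_nonneg hu0.le]
      have : u ≤ δ₄/2 := (min_le_left _ _).trans (min_le_right _ _)
      linarith
    have huc : u ≤ c/(2*(M₂+1)) := min_le_right _ _
    have h1 := hb₂' u ⟨hu0.le, hu2⟩
    have h2 : E (p 0) ≤ E (p (-u)) := hmin4 hu4
    have h3 : c * u ^ (2*k+1) ≤ M₂ * u ^ (2*k+2) := by linarith
    have h4 : c ≤ M₂ * u := by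
      have h5 : c * u ^ (2*k+1) ≤ (M₂ * u) * u ^ (2*k+1) := by
        calc c * u ^ (2*k+1) = c * u ^ (2*k+1) := by norm_num
          _ ≤ M₂ * u ^ (2*k+2) := h3
          _ = (M₂ * u) * u ^ (2*k+1) := by ring_nf
      exact le_of_mul_le_mul_right h5 (pow_pos hu0 _)
    have h6 : (M₂+1) * u ≤ c/2 := by
      calc (M₂+1) * u ≤ (M₂+1) * (c/(2*(M₂+1))) :=
            mul_le_mul_of_nonneg_left huc (by linarith)
        _ = c/2 := by field_simp
    nlinarith
  -- lower bound for the displacement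
  have haN : 0 < ‖a‖ := norm_pos_iff.mpr hact
  set β : ℝ := (j.factorial : ℝ)⁻¹ * ‖a‖ with hβ_def
  have hβ : 0 < β := by positivity
  set b : ℝ := β/2 with hb_def
  have hb : 0 < b := half_pos hβ
  set δ₅ := min δ₃ (β/(2*(M₃+1))) with hδ₅_def
  have hδ₅ : 0 < δ₅ := lt_min hδ₃ (by positivity)
  have hlow : ∀ t ∈ Set.Icc (0:ℝ) δ₅, b * t ^ j ≤ ‖p t - p 0‖ := by
    intro t ht
    obtain ⟨ht0, ht5⟩ := ht
    have h := hb₃ t ⟨ht0, ht5.trans (min_le_left _ _)⟩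
    rw [taylor_sum_eval _ _ hj _ hvan', ← ha] at h
    have h1 : ‖p t - (p 0 + ((j.factorial : ℝ)⁻¹ * t ^ j) • a)‖
        = ‖p t - p 0 - ((j.factorial : ℝ)⁻¹ * t ^ j) • a‖ := by
      rw [sub_add_eq_sub_sub]
    have h2 : ‖((j.factorial : ℝ)⁻¹ * t ^ j) • a‖ = β * t ^ j := by
      rw [norm_smul, Real.norm_eq_abs, abs_of_nonneg (by positivity), hβ_def]; ring
    have h3 : β * t ^ j - ‖p t - p 0 - ((j.factorial : ℝ)⁻¹ * t ^ j) • a‖ ≤ ‖p t - p 0‖ := by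
      have h4 := norm_sub_norm_le (((j.factorial : ℝ)⁻¹ * t ^ j) • a) (p t - p 0)
      rw [h2, norm_sub_rev (((j.factorial : ℝ)⁻¹ * t ^ j) • a) (p t - p 0)] at h4
      linarith
    have h5 : M₃ * t ^ (j+1) ≤ (β/2) * t ^ j := by
      have h7 : M₃ * t ≤ β/2 := by
        have h8 : t ≤ β/(2*(M₃+1)) := ht5.trans (min_le_right _ _)
        calc M₃ * t ≤ (M₃+1) * t := mul_le_mul_of_nonneg_right (by linarith) ht0
          _ ≤ (M₃+1) * (β/(2*(M₃+1))) := mul_le_mul_of_nonneg_left h8 (by linarith)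
          _ = β/2 := by field_simp
      calc M₃ * t ^ (j+1) = (M₃ * t) * t ^ j := by rw [pow_succ]; ring
        _ ≤ (β/2) * t ^ j := mul_le_mul_of_nonneg_right h7 (pow_nonneg ht0 _)
    rw [h1] at h
    have := h.trans h5
    rw [hb_def]
    linarith
  -- conclusion
  refine ⟨(M₁+1) / b ^ s, div_pos (by linarith) (Real.rpow_pos_of_pos hb _), min δ₁ δ₅,
    lt_min hδ₁ hδ₅, fun t ht => ?_⟩
  obtain ⟨ht0, htm⟩ := ht
  have ht1 : t ≤ δ₁ := htm.trans (min_le_left _ _)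
  have ht5 : t ≤ δ₅ := htm.trans (min_le_right _ _)
  have upper : E (p t) - E (p 0) ≤ M₁ * t ^ (2*k+2) := by
    have h := hb₁' t ⟨ht0, ht1⟩
    nlinarith [pow_nonneg ht0 (2*k+1), mul_nonpos_iff.mpr
      (Or.inr ⟨hc0, pow_nonneg ht0 (2*k+1)⟩)]
  have lower := hlow t ⟨ht0, ht5⟩
  have h1 : (b * t ^ j) ^ s ≤ ‖p t - p 0‖ ^ s :=
    Real.rpow_le_rpow (by positivity) lower hs0
  have h2 : (b * t ^ j) ^ s = b ^ s * t ^ (2*k+2) := by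
    rw [Real.mul_rpow hb.le (pow_nonneg ht0 _)]
    congr 1
    rw [← Real.rpow_natCast t j, ← Real.rpow_mul ht0]
    have hjs : (j:ℝ) * s = ((2*k+2 : ℕ) : ℝ) := by
      rw [hs_def, mul_comm ((j:ℝ)) _, div_mul_cancel₀ _ hjR]
      push_cast
      ring
    rw [hjs, Real.rpow_natCast]
  have hbs : (0:ℝ) < b ^ s := Real.rpow_pos_of_pos hb _
  have hcf : (0:ℝ) < (M₁+1) / b ^ s := div_pos (by linarith) hbs
  calc E (p t) - E (p 0) ≤ M₁ * t ^ (2*k+2) := upper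
    _ ≤ ((M₁+1) / b ^ s) * ((b * t ^ j) ^ s) := by
        rw [h2, ← mul_assoc, div_mul_cancel₀ _ (ne_of_gt hbs)]
        exact mul_le_mul_of_nonneg_right (by linarith) (pow_nonneg ht0 _)
    _ ≤ ((M₁+1) / b ^ s) * ‖p t - p 0‖ ^ s :=
        mul_le_mul_of_nonneg_left h1 hcf.le
end

section
/- Let (G,p) be a framework with no zero-length edges and E a stiff-bar energy at p. An analytic trajectory p(t) at p is a (j,k)-flex of (G,p) (i.e., p(t) is j-active and the squared edge-length vector m(p(t)) is k-vanishing) if and only if it is a (j,2k) E-flex (i.e., p(t) is j-active and E(p(t)) is 2k-vanishing). Moreover, p(t) is a (j,2k) E-flex if and only if it is a (j,2k+1) E-flex. -/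
/-- A function of `t` is `k`-vanishing if its first `k` derivatives vanish at `t = 0`. -/
def KVanishing {F : Type*} [NormedAddCommGroup F] [NormedSpace ℝ F]
    (h : ℝ → F) (k : ℕ) : Prop :=
  ∀ i, 1 ≤ i → i ≤ k → iteratedDeriv i h 0 = 0

/-- A trajectory is `j`-active if it is `(j-1)`-vanishing but its `j`-th derivative at
`t = 0` is nonzero. -/
def JActive {F : Type*} [NormedAddCommGroup F] [NormedSpace ℝ F]
    (h : ℝ → F) (j : ℕ) : Prop :=
  KVanishing h (j - 1) ∧ iteratedDeriv j h 0 ≠ 0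


open Filter Topology

private lemma iteratedDeriv_zero_fun' {n : ℕ} {x : ℝ} :
    iteratedDeriv n (fun _ : ℝ => (0:ℝ)) x = 0 := by
  induction n generalizing x with
  | zero => simp
  | succ n ih => rw [iteratedDeriv_succ']; simp only [deriv_const']; exact ih

private lemma iteratedDeriv_const_zero_aux {n : ℕ} (hn : 1 ≤ n) (c : ℝ) {x : ℝ} :
    iteratedDeriv n (fun _ : ℝ => c) x = 0 := by
  obtain ⟨m, rfl⟩ : ∃ m, n = m + 1 := ⟨n - 1, (Nat.succ_pred_eq_of_pos hn).symm⟩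
  rw [iteratedDeriv_succ']
  simp only [deriv_const']
  exact iteratedDeriv_zero_fun'

private lemma iteratedDeriv_sub_const' {n : ℕ} (hn : 1 ≤ n) (f : ℝ → ℝ) (c x : ℝ) :
    iteratedDeriv n (fun t => f t - c) x = iteratedDeriv n f x := by
  obtain ⟨m, rfl⟩ : ∃ m, n = m + 1 := ⟨n - 1, (Nat.succ_pred_eq_of_pos hn).symm⟩
  rw [iteratedDeriv_succ', iteratedDeriv_succ']
  congr 1
  funext y
  exact deriv_sub_const c

private lemma analyticAt_sqrt' {x : ℝ} (hx : 0 < x) : AnalyticAt ℝ Real.sqrt x := by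
  have hm : (x : ℂ) ∈ Complex.slitPlane := Complex.ofReal_mem_slitPlane.2 hx
  have h2 : AnalyticAt ℂ (fun z : ℂ => Complex.exp (Complex.log z * (2:ℂ)⁻¹)) (x : ℂ) :=
    analyticAt_cexp.comp ((analyticAt_clog hm).mul analyticAt_const)
  have h3 : AnalyticAt ℝ (fun y : ℝ =>
      (Complex.exp (Complex.log (y : ℂ) * (2:ℂ)⁻¹)).re) x := by
    exact (Complex.reCLM.analyticAt _).comp
      ((h2.restrictScalars).comp (Complex.ofRealCLM.analyticAt x))
  apply h3.congr
  filter_upwards [eventually_gt_nhds hx] with y hy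
  have hlog : Complex.log (y : ℂ) = (Real.log y : ℂ) := (Complex.ofReal_log hy.le).symm
  have : Complex.exp (Complex.log (y : ℂ) * (2:ℂ)⁻¹)
      = ((Real.exp (Real.log y * 2⁻¹) : ℝ) : ℂ) := by
    rw [hlog, Complex.ofReal_exp]
    push_cast
    ring_nf
  rw [this, Complex.ofReal_re]
  have hsq : Real.exp (Real.log y * 2⁻¹) ^ 2 = y := by
    rw [← Real.exp_nat_mul]
    push_cast
    rw [show (2:ℝ) * (Real.log y * 2⁻¹) = Real.log y by ring, Real.exp_log hy]
  conv_rhs => rw [← hsq]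
  rw [Real.sqrt_sq (Real.exp_pos _).le]

private noncomputable def shiftSeries (q : FormalMultilinearSeries ℝ ℝ ℝ) (m : ℕ) :
    FormalMultilinearSeries ℝ ℝ ℝ := fun nn =>
  ContinuousMultilinearMap.mkPiRing ℝ (Fin nn) (if m ≤ nn then q.coeff (nn - m) else 0)

private lemma shiftSeries_coeff (q : FormalMultilinearSeries ℝ ℝ ℝ) (m nn : ℕ) :
    (shiftSeries q m).coeff nn = (if m ≤ nn then q.coeff (nn - m) else 0) := by
  rw [FormalMultilinearSeries.coeff, shiftSeries, ContinuousMultilinearMap.mkPiRing_apply]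
  simp

private lemma pow_mul_deriv {g : ℝ → ℝ} (hg : AnalyticAt ℝ g 0) (m : ℕ) {h : ℝ → ℝ}
    (hh : h =ᶠ[𝓝 0] fun t => t ^ m * g t) :
    (∀ i < m, iteratedDeriv i h 0 = 0) ∧ iteratedDeriv m h 0 = (m.factorial : ℝ) * g 0 := by
  obtain ⟨q, hq⟩ := hg
  have hcoeff := shiftSeries_coeff q m
  have hps : HasFPowerSeriesAt (fun t => t ^ m * g t) (shiftSeries q m) 0 := by
    rw [hasFPowerSeriesAt_iff]
    have hz' := hasFPowerSeriesAt_iff.mp hq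
    simp only [zero_add] at hz' ⊢
    filter_upwards [hz'] with z hz
    have h1 : HasSum (fun nn => z ^ (nn + m) • (shiftSeries q m).coeff (nn + m))
        (z ^ m * g z) := by
      have h0 := hz.mul_left (z ^ m)
      have heqf : (fun nn => z ^ (nn + m) • (shiftSeries q m).coeff (nn + m))
          = fun nn => z ^ m * (z ^ nn • q.coeff nn) := by
        funext nn
        rw [hcoeff, if_pos (Nat.le_add_left m nn), Nat.add_sub_cancel, smul_eq_mul,
          smul_eq_mul, pow_add]
        ring
      rw [heqf]
      exact h0
    have h2 := (hasSum_nat_add_iff (f := fun nn => z ^ nn • (shiftSeries q m).coeff nn) m).mp h1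
    have hzero : (∑ i ∈ Finset.range m, z ^ i • (shiftSeries q m).coeff i) = 0 := by
      apply Finset.sum_eq_zero
      intro i hi
      rw [hcoeff, if_neg (by simpa using (Finset.mem_range.mp hi).not_ge), smul_zero]
    rw [hzero, add_zero] at h2
    exact h2
  have hiter : ∀ nn, iteratedDeriv nn h 0 = (nn.factorial : ℝ) * (shiftSeries q m).coeff nn := by
    intro nn
    rw [hh.iteratedDeriv_eq]
    obtain ⟨r, hr⟩ := hps
    have key := hr.factorial_smul (1 : ℝ) nn
    rw [iteratedDeriv_eq_iteratedFDeriv, ← key]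
    have h1 : (shiftSeries q m) nn (fun _ => (1:ℝ)) = (shiftSeries q m).coeff nn := rfl
    rw [h1, nsmul_eq_mul]
  have hq0 : q.coeff 0 = g 0 := by
    have := hq.coeff_zero (fun _ => (1:ℝ))
    simpa using this
  constructor
  · intro i hi
    rw [hiter i, hcoeff, if_neg (by omega), mul_zero]
  · rw [hiter m, hcoeff, if_pos le_rfl, Nat.sub_self, hq0]

private lemma kvanish_char {h g : ℝ → ℝ} {c : ℝ} {m : ℕ} (hm : 1 ≤ m)
    (hg : AnalyticAt ℝ g 0) (hg0 : g 0 ≠ 0)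
    (heq : h =ᶠ[𝓝 0] fun t => c + t ^ m * g t) (k : ℕ) :
    KVanishing h k ↔ k < m := by
  have heq' : (fun t => h t - c) =ᶠ[𝓝 0] fun t => t ^ m * g t := by
    filter_upwards [heq] with t ht
    rw [ht]; ring
  obtain ⟨hlow, hhigh⟩ := pow_mul_deriv hg m heq'
  have hid : ∀ i, 1 ≤ i → iteratedDeriv i h 0 = iteratedDeriv i (fun t => h t - c) 0 :=
    fun i hi => (iteratedDeriv_sub_const' hi h c 0).symm
  constructor
  · intro hk
    by_contra hlt
    push_neg at hlt
    have := hk m hm hlt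
    rw [hid m hm, hhigh] at this
    have hf : (m.factorial : ℝ) ≠ 0 := Nat.cast_ne_zero.mpr m.factorial_ne_zero
    exact hg0 ((mul_eq_zero.mp this).resolve_left hf)
  · intro hkm i h1 h2
    rw [hid i h1]
    exact hlow i (lt_of_le_of_lt h2 hkm)

private lemma dichot {h : ℝ → ℝ} (hh : AnalyticAt ℝ h 0) (h0 : h 0 = 0)
    (hne : ¬ h =ᶠ[𝓝 0] 0) :
    ∃ m g, 1 ≤ m ∧ AnalyticAt ℝ g 0 ∧ g 0 ≠ 0 ∧ h =ᶠ[𝓝 0] fun t => t ^ m * g t := by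
  have hne' : ¬ ∀ᶠ z in 𝓝 (0:ℝ), h z = 0 := fun H => hne (H.mono fun z hz => hz)
  obtain ⟨m, g, hg, hg0, hfac⟩ := hh.exists_eventuallyEq_pow_smul_nonzero_iff.mpr hne'
  have hfac' : h =ᶠ[𝓝 0] fun t => t ^ m * g t := by
    filter_upwards [hfac] with z hz
    simpa [smul_eq_mul] using hz
  refine ⟨m, g, ?_, hg, hg0, hfac'⟩
  rcases Nat.eq_zero_or_pos m with hm | hm
  · exfalso
    have := hfac'.self_of_nhds
    rw [h0, hm] at this
    simp at this
    exact hg0 this.symm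
  · exact hm

private lemma phi_fact {E : ℝ → ℝ} {d : ℝ} (hE : AnalyticAt ℝ E d) (hE1 : deriv E d = 0)
    (hE2 : 0 < iteratedDeriv 2 E d) :
    ∃ H : ℝ → ℝ, AnalyticAt ℝ H 0 ∧ 0 < H 0 ∧
      (fun x => E (d + x) - E d) =ᶠ[𝓝 0] fun x => x ^ 2 * H x := by
  set φ : ℝ → ℝ := fun x => E (d + x) - E d with hφdef
  have hφa : AnalyticAt ℝ φ 0 := by
    have h1 : AnalyticAt ℝ (fun x : ℝ => E (d + x)) 0 := by
      have := hE.comp_of_eq (f := fun x : ℝ => d + x) (x := 0)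
        (analyticAt_const.add analyticAt_id) (by simp)
      simpa [Function.comp_def] using this
    exact h1.sub analyticAt_const
  have hφ0 : φ 0 = 0 := by simp [hφdef]
  have hφ1 : iteratedDeriv 1 φ 0 = 0 := by
    rw [iteratedDeriv_one, hφdef]
    have : deriv φ 0 = deriv (fun x : ℝ => E (d + x)) 0 := deriv_sub_const _
    rw [hφdef] at this
    rw [this, deriv_comp_const_add, add_zero, hE1]
  have hφ2 : iteratedDeriv 2 φ 0 = iteratedDeriv 2 E d := by
    rw [iteratedDeriv_sub_const' (by norm_num) _ _ _,
      iteratedDeriv_comp_const_add 2 E d]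
    simp
  have hne : ¬ φ =ᶠ[𝓝 0] 0 := by
    intro hcon
    have h0 : iteratedDeriv 2 φ 0 = iteratedDeriv 2 (0 : ℝ → ℝ) 0 :=
      hcon.iteratedDeriv_eq 2
    have hz : iteratedDeriv 2 (0 : ℝ → ℝ) (0:ℝ) = 0 := by
      have : (0 : ℝ → ℝ) = fun _ : ℝ => (0:ℝ) := rfl
      rw [this]; exact iteratedDeriv_zero_fun'
    rw [hz, hφ2] at h0
    exact absurd h0 (ne_of_gt hE2)
  obtain ⟨m, H, hm1, hHa, hH0, hfac⟩ := dichot hφa hφ0 hne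
  obtain ⟨hlow, hhigh⟩ := pow_mul_deriv hHa m hfac
  have hm2 : m = 2 := by
    rcases lt_trichotomy m 2 with h | h | h
    · exfalso
      interval_cases m
      rw [hφ1] at hhigh
      simp at hhigh
      exact hH0 hhigh.symm
    · exact h
    · exfalso
      have := hlow 2 h
      rw [hφ2] at this
      exact absurd this (ne_of_gt hE2)
  subst hm2
  refine ⟨H, hHa, ?_, hfac⟩
  have : iteratedDeriv 2 φ 0 = 2 * H 0 := by
    rw [hhigh]; norm_num
  rw [hφ2] at this
  linarith

/-- For a stiff-bar energy `E` at `p 0`, a trajectory is a `(j,k)`-flex (squared edge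
lengths are `k`-vanishing) iff it is a `(j,2k)` `E`-flex, iff it is a `(j,2k+1)` `E`-flex. -/
theorem flex_iff_Eflex (n d j k : ℕ) (hj : 1 ≤ j)
    (edges : Finset (Fin n × Fin n))
    (p₀ : Fin n → EuclideanSpace ℝ (Fin d))
    (hnz : ∀ e ∈ edges, p₀ e.1 ≠ p₀ e.2)
    (Eij : Fin n × Fin n → ℝ → ℝ)
    (hE : ∀ e ∈ edges, AnalyticAt ℝ (Eij e) (dist (p₀ e.1) (p₀ e.2)))
    (hE1 : ∀ e ∈ edges, deriv (Eij e) (dist (p₀ e.1) (p₀ e.2)) = 0)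
    (hE2 : ∀ e ∈ edges, 0 < iteratedDeriv 2 (Eij e) (dist (p₀ e.1) (p₀ e.2)))
    (p : ℝ → Fin n → EuclideanSpace ℝ (Fin d))
    (hp : AnalyticAt ℝ p 0) (hp0 : p 0 = p₀) :
    ((JActive p j ∧ ∀ e ∈ edges,
        KVanishing (fun t => (dist (p t e.1) (p t e.2)) ^ 2) k) ↔
      (JActive p j ∧
        KVanishing (fun t => ∑ e ∈ edges, Eij e (dist (p t e.1) (p t e.2))) (2 * k))) ∧
    ((JActive p j ∧
        KVanishing (fun t => ∑ e ∈ edges, Eij e (dist (p t e.1) (p t e.2))) (2 * k)) ↔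
      (JActive p j ∧
        KVanishing (fun t => ∑ e ∈ edges, Eij e (dist (p t e.1) (p t e.2))) (2 * k + 1))) := by
  classical
  set D : Fin n × Fin n → ℝ := fun e => dist (p₀ e.1) (p₀ e.2) with hDdef
  have hD : ∀ e ∈ edges, 0 < D e := fun e he => dist_pos.mpr (hnz e he)
  set Q : Fin n × Fin n → ℝ → ℝ := fun e t => ∑ i, (p t e.1 i - p t e.2 i) ^ 2 with hQdef
  have hQnn : ∀ e t, 0 ≤ Q e t := fun e t => Finset.sum_nonneg fun i _ => sq_nonneg _
  have hdist : ∀ e t, dist (p t e.1) (p t e.2) = Real.sqrt (Q e t) := by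
    intro e t
    rw [EuclideanSpace.dist_eq]
    congr 1
    refine Finset.sum_congr rfl fun i _ => ?_
    rw [Real.dist_eq, sq_abs]
  have hdist_sq : ∀ e t, dist (p t e.1) (p t e.2) ^ 2 = Q e t := fun e t => by
    rw [hdist, Real.sq_sqrt (hQnn e t)]
  have hQa : ∀ e, AnalyticAt ℝ (Q e) 0 := by
    intro e
    apply Finset.analyticAt_fun_sum
    intro i _
    have h1 : AnalyticAt ℝ (fun t => p t e.1 i) 0 := by
      have := (((EuclideanSpace.proj i).comp
        (ContinuousLinearMap.proj (R := ℝ)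
          (φ := fun _ : Fin n => EuclideanSpace ℝ (Fin d)) e.1)).analyticAt (p 0)).comp hp
      simpa [Function.comp_def] using this
    have h2 : AnalyticAt ℝ (fun t => p t e.2 i) 0 := by
      have := (((EuclideanSpace.proj i).comp
        (ContinuousLinearMap.proj (R := ℝ)
          (φ := fun _ : Fin n => EuclideanSpace ℝ (Fin d)) e.2)).analyticAt (p 0)).comp hp
      simpa [Function.comp_def] using this
    exact (h1.sub h2).pow 2
  have hQ0 : ∀ e, Q e 0 = D e ^ 2 := by
    intro e
    rw [← hdist_sq e 0, hp0]
  set l : Fin n × Fin n → ℝ → ℝ := fun e t => Real.sqrt (Q e t) with hldef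
  have hla : ∀ e ∈ edges, AnalyticAt ℝ (l e) 0 := by
    intro e he
    have hs : AnalyticAt ℝ Real.sqrt (Q e 0) := by
      apply analyticAt_sqrt'
      rw [hQ0]
      exact pow_pos (hD e he) 2
    simpa [Function.comp_def, hldef] using hs.comp (hQa e)
  have hl0 : ∀ e ∈ edges, l e 0 = D e := by
    intro e he
    rw [hldef]
    simp only
    rw [hQ0, Real.sqrt_sq dist_nonneg]
  have hlsq : ∀ e t, l e t ^ 2 = Q e t := fun e t => Real.sq_sqrt (hQnn e t)
  have hua : ∀ e ∈ edges, AnalyticAt ℝ (fun t => l e t - D e) 0 :=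
    fun e he => (hla e he).sub analyticAt_const
  have hu0 : ∀ e ∈ edges, l e 0 - D e = 0 := fun e he => by rw [hl0 e he, sub_self]
  -- energy factorizations
  have hch : ∀ e : Fin n × Fin n, ∃ H : ℝ → ℝ, e ∈ edges →
      (AnalyticAt ℝ H 0 ∧ 0 < H 0 ∧
        (fun x => Eij e (D e + x) - Eij e (D e)) =ᶠ[𝓝 0] fun x => x ^ 2 * H x) := by
    intro e
    by_cases he : e ∈ edges
    · obtain ⟨H, h1, h2, h3⟩ := phi_fact (hE e he) (hE1 e he) (hE2 e he)
      exact ⟨H, fun _ => ⟨h1, h2, h3⟩⟩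
    · exact ⟨fun _ => 0, fun h => absurd h he⟩
  choose Hf hHf using hch
  -- rewrite the goal
  have hfun1 : ∀ e : Fin n × Fin n,
      (fun t => dist (p t e.1) (p t e.2) ^ 2) = Q e := fun e => funext (hdist_sq e)
  have hfun2 : (fun t => ∑ e ∈ edges, Eij e (dist (p t e.1) (p t e.2)))
      = fun t => ∑ e ∈ edges, Eij e (l e t) :=
    funext fun t => Finset.sum_congr rfl fun e _ => by rw [hdist]
  rw [hfun2]
  simp only [hfun1]
  set S : ℝ → ℝ := fun t => ∑ e ∈ edges, Eij e (l e t) with hSdef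
  by_cases hA : ∀ e ∈ edges, (fun t => l e t - D e) =ᶠ[𝓝 0] (0 : ℝ → ℝ)
  · -- all edges locally constant
    have hQc : ∀ e ∈ edges, ∀ K, KVanishing (Q e) K := by
      intro e he K
      have hev : Q e =ᶠ[𝓝 0] fun _ => D e ^ 2 := by
        filter_upwards [hA e he] with t ht
        have : l e t = D e := by
          have := ht
          simp only [Pi.zero_apply] at this
          linarith
        rw [← hlsq e t, this]
      intro i h1 _
      rw [hev.iteratedDeriv_eq i]
      exact iteratedDeriv_const_zero_aux h1 _
    have hSc : ∀ K, KVanishing S K := by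
      intro K
      have hev : S =ᶠ[𝓝 0] fun _ => ∑ e ∈ edges, Eij e (D e) := by
        have hall := (eventually_all_finset edges).mpr hA
        filter_upwards [hall] with t ht
        refine Finset.sum_congr rfl fun e he => ?_
        have h1 := ht e he
        simp only [Pi.zero_apply] at h1
        have : l e t = D e := by linarith
        rw [this]
      intro i h1 _
      rw [hev.iteratedDeriv_eq i]
      exact iteratedDeriv_const_zero_aux h1 _
    exact ⟨⟨fun ⟨hJ, _⟩ => ⟨hJ, hSc _⟩, fun ⟨hJ, _⟩ => ⟨hJ, fun e he => hQc e he k⟩⟩,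
      ⟨fun ⟨hJ, _⟩ => ⟨hJ, hSc _⟩, fun ⟨hJ, _⟩ => ⟨hJ, hSc _⟩⟩⟩
  · -- some edge moves
    set T : Finset (Fin n × Fin n) :=
      edges.filter (fun e => ¬ ((fun t => l e t - D e) =ᶠ[𝓝 0] (0 : ℝ → ℝ))) with hTdef
    have hTsub : T ⊆ edges := Finset.filter_subset _ _
    have hTne : T.Nonempty := by
      push_neg at hA
      obtain ⟨e, he, hne⟩ := hA
      exact ⟨e, Finset.mem_filter.mpr ⟨he, hne⟩⟩
    have hch2 : ∀ e : Fin n × Fin n, ∃ mg : ℕ × (ℝ → ℝ), e ∈ T →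
        (1 ≤ mg.1 ∧ AnalyticAt ℝ mg.2 0 ∧ mg.2 0 ≠ 0 ∧
          (fun t => l e t - D e) =ᶠ[𝓝 0] fun t => t ^ mg.1 * mg.2 t) := by
      intro e
      by_cases heT : e ∈ T
      · have he : e ∈ edges := hTsub heT
        have hne : ¬ ((fun t => l e t - D e) =ᶠ[𝓝 0] (0 : ℝ → ℝ)) :=
          (Finset.mem_filter.mp heT).2
        obtain ⟨mm, g, h1, h2, h3, h4⟩ := dichot (hua e he) (hu0 e he) hne
        exact ⟨(mm, g), fun _ => ⟨h1, h2, h3, h4⟩⟩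
      · exact ⟨(1, fun _ => 1), fun h => absurd h heT⟩
    choose F hF using hch2
    set M : Fin n × Fin n → ℕ := fun e => (F e).1 with hMdef
    set G : Fin n × Fin n → ℝ → ℝ := fun e => (F e).2 with hGdef
    set m : ℕ := (T.image M).min' (hTne.image M) with hmdef
    obtain ⟨e₀, he₀T, hMe₀⟩ : ∃ e₀ ∈ T, M e₀ = m := by
      have := (T.image M).min'_mem (hTne.image M)
      rw [Finset.mem_image] at this
      obtain ⟨e₀, h1, h2⟩ := this
      exact ⟨e₀, h1, h2⟩
    have hmle : ∀ e ∈ T, m ≤ M e := fun e he =>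
      Finset.min'_le _ _ (Finset.mem_image_of_mem M he)
    have hm1 : 1 ≤ m := hMe₀ ▸ (hF e₀ he₀T).1
    -- characterization of Q-vanishing
    have hQchar : ∀ e ∈ edges, (KVanishing (Q e) k ↔ (e ∈ T → k < M e)) := by
      intro e he
      by_cases heT : e ∈ T
      · obtain ⟨hM1, hGa, hG0, hfac⟩ := hF e heT
        have hQfac : Q e =ᶠ[𝓝 0]
            fun t => D e ^ 2 + t ^ M e * (G e t * (2 * D e + (l e t - D e))) := by
          filter_upwards [hfac] with t ht
          have hl : l e t = D e + t ^ M e * G e t := by linarith [ht]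
          rw [← hlsq e t, hl]
          ring
        have hg0 : G e 0 * (2 * D e + (l e 0 - D e)) ≠ 0 := by
          rw [hu0 e he, add_zero]
          exact mul_ne_zero hG0 (ne_of_gt (by linarith [hD e he]))
        have := kvanish_char hM1
          (hGa.mul (analyticAt_const.add ((hla e he).sub analyticAt_const))) hg0 hQfac k
        rw [this]
        simp [heT, hMdef]
      · have hz : (fun t => l e t - D e) =ᶠ[𝓝 0] (0 : ℝ → ℝ) := by
          by_contra hcon
          exact heT (Finset.mem_filter.mpr ⟨he, hcon⟩)
        have hQc : KVanishing (Q e) k := by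
          have hev : Q e =ᶠ[𝓝 0] fun _ => D e ^ 2 := by
            filter_upwards [hz] with t ht
            simp only [Pi.zero_apply] at ht
            have : l e t = D e := by linarith
            rw [← hlsq e t, this]
          intro i h1 _
          rw [hev.iteratedDeriv_eq i]
          exact iteratedDeriv_const_zero_aux h1 _
        simp [hQc, heT]
    have hQall : (∀ e ∈ edges, KVanishing (Q e) k) ↔ k < m := by
      constructor
      · intro h
        have := (hQchar e₀ (hTsub he₀T)).mp (h e₀ (hTsub he₀T)) he₀T
        omega
      · intro h e he
        rw [hQchar e he]
        intro heT
        exact lt_of_lt_of_le h (hmle e heT)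
    -- the energy function
    set GG : ℝ → ℝ := fun t =>
      ∑ e ∈ T, t ^ (2 * (M e - m)) * G e t ^ 2 * Hf e (l e t - D e) with hGGdef
    have hGGa : AnalyticAt ℝ GG 0 := by
      apply Finset.analyticAt_fun_sum
      intro e heT
      have he : e ∈ edges := hTsub heT
      have h1 : AnalyticAt ℝ (fun t : ℝ => t ^ (2 * (M e - m))) 0 :=
        (analyticAt_id).pow _
      have h2 := ((hF e heT).2.1).pow 2
      have h3 : AnalyticAt ℝ (fun t => Hf e (l e t - D e)) 0 := by
        have := ((hHf e he).1.comp_of_eq (hua e he) (hu0 e he))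
        simpa [Function.comp_def] using this
      exact (h1.mul h2).mul h3
    have hGG0 : 0 < GG 0 := by
      rw [hGGdef]
      simp only
      apply Finset.sum_pos'
      · intro e heT
        have he : e ∈ edges := hTsub heT
        apply mul_nonneg (mul_nonneg (pow_nonneg le_rfl _) (sq_nonneg _))
        rw [hu0 e he]
        exact (hHf e he).2.1.le
      · refine ⟨e₀, he₀T, ?_⟩
        have he : e₀ ∈ edges := hTsub he₀T
        rw [hu0 e₀ he, hMe₀, Nat.sub_self, mul_zero, pow_zero, one_mul]
        exact mul_pos (pow_two_pos_of_ne_zero ((hF e₀ he₀T).2.2.1)) (hHf e₀ he).2.1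
    have hSfac : S =ᶠ[𝓝 0]
        fun t => (∑ e ∈ edges, Eij e (D e)) + t ^ (2 * m) * GG t := by
      have hall : ∀ᶠ t in 𝓝 (0:ℝ), ∀ e ∈ edges,
          (Eij e (D e + (l e t - D e)) - Eij e (D e)
            = (l e t - D e) ^ 2 * Hf e (l e t - D e)) ∧
          (e ∈ T → l e t - D e = t ^ M e * G e t) ∧
          (e ∉ T → l e t - D e = 0) := by
        rw [eventually_all_finset]
        intro e he
        have hphi : ∀ᶠ t in 𝓝 (0:ℝ), Eij e (D e + (l e t - D e)) - Eij e (D e)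
            = (l e t - D e) ^ 2 * Hf e (l e t - D e) := by
          have hcont : Filter.Tendsto (fun t => l e t - D e) (𝓝 0) (𝓝 0) := by
            have := (hua e he).continuousAt
            rw [ContinuousAt, hu0 e he] at this
            exact this
          exact hcont.eventually (hHf e he).2.2
        have hT1 : ∀ᶠ t in 𝓝 (0:ℝ), (e ∈ T → l e t - D e = t ^ M e * G e t) := by
          by_cases heT : e ∈ T
          · filter_upwards [(hF e heT).2.2.2] with t ht _
            exact ht
          · exact Eventually.of_forall fun t h => absurd h heT
        have hT2 : ∀ᶠ t in 𝓝 (0:ℝ), (e ∉ T → l e t - D e = 0) := by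
          by_cases heT : e ∈ T
          · exact Eventually.of_forall fun t h => absurd heT h
          · have hz : (fun t => l e t - D e) =ᶠ[𝓝 0] (0 : ℝ → ℝ) := by
              by_contra hcon
              exact heT (Finset.mem_filter.mpr ⟨he, hcon⟩)
            filter_upwards [hz] with t ht _
            simpa using ht
        exact hphi.and (hT1.and hT2)
      filter_upwards [hall] with t ht
      have step1 : S t = ∑ e ∈ edges,
          (Eij e (D e) + (l e t - D e) ^ 2 * Hf e (l e t - D e)) := by
        refine Finset.sum_congr rfl fun e he => ?_
        have h1 := (ht e he).1
        have : Eij e (l e t) = Eij e (D e + (l e t - D e)) := by ring_nf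
        rw [this]
        linarith [h1]
      rw [step1, Finset.sum_add_distrib]
      congr 1
      have step2 : ∑ e ∈ edges, (l e t - D e) ^ 2 * Hf e (l e t - D e)
          = ∑ e ∈ T, (l e t - D e) ^ 2 * Hf e (l e t - D e) := by
        symm
        apply Finset.sum_subset hTsub
        intro e he heT
        rw [(ht e he).2.2 heT]
        ring
      rw [step2, Finset.mul_sum]
      refine Finset.sum_congr rfl fun e heT => ?_
      have he : e ∈ edges := hTsub heT
      rw [(ht e he).2.1 heT]
      have hpow : t ^ (2 * m) * t ^ (2 * (M e - m)) = t ^ (2 * M e) := by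
        rw [← pow_add]
        congr 1
        have := hmle e heT
        omega
      have h2M : (t ^ M e) ^ 2 = t ^ (2 * M e) := by rw [← pow_mul, mul_comm]
      calc (t ^ M e * G e t) ^ 2 * Hf e (t ^ M e * G e t)
          = t ^ (2 * M e) * G e t ^ 2 * Hf e (t ^ M e * G e t) := by rw [← h2M]; ring
        _ = t ^ (2 * m) * (t ^ (2 * (M e - m)) * G e t ^ 2 * Hf e (t ^ M e * G e t)) := by
            rw [← hpow]; ring
    have hSchar : ∀ K, KVanishing S K ↔ K < 2 * m :=
      fun K => kvanish_char (by omega) hGGa (ne_of_gt hGG0) hSfac K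
    constructor
    · constructor
      · rintro ⟨hJ, h⟩
        exact ⟨hJ, (hSchar _).mpr (by have := hQall.mp h; omega)⟩
      · rintro ⟨hJ, h⟩
        exact ⟨hJ, hQall.mpr (by have := (hSchar _).mp h; omega)⟩
    · constructor
      · rintro ⟨hJ, h⟩
        exact ⟨hJ, (hSchar _).mpr (by have := (hSchar _).mp h; omega)⟩
      · rintro ⟨hJ, h⟩
        exact ⟨hJ, (hSchar _).mpr (by have := (hSchar _).mp h; omega)⟩
end

section
/- Let f : ℝⁿ → ℝ be C^{2k+1} with f(0) = 0 and a critical point at 0. Let S be a compact parameter space and x(t;x₀) a family of test trajectories, C^{2k+1} in (t,x₀) on [0,ε] × S with x(0;x₀) = 0, which initially covers a neighborhood of the origin, and such that for every x₀ ∈ S the Taylor expansion of f(x(t;x₀)) in t at 0 has all terms of order below 2k equal to zero, with coefficient a_{2k}(x₀) at order 2k. If a_{2k}(x₀) > 0 for all x₀ ∈ S, then there exist c > 0 and a neighborhood U of the origin such that f(x) ≥ c|x|^{2k} for all x ∈ U; in particular 0 is a strict local minimum of f. -/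
open Set

lemma iteratedDerivWithin_eq_iteratedDeriv' {φ : ℝ → ℝ} {N : ℕ}
    (hφ : ContDiff ℝ (N : ℕ∞) φ) {s : Set ℝ} (hs : UniqueDiffOn ℝ s) {x : ℝ} (hx : x ∈ s)
    {j : ℕ} (hj : j ≤ N) :
    iteratedDerivWithin j φ s x = iteratedDeriv j φ x := by
  rw [iteratedDerivWithin_eq_iteratedFDerivWithin, iteratedDeriv_eq_iteratedFDeriv]
  congr 1
  have H := (contDiff_iff_ftaylorSeries.mp hφ).hasFTaylorSeriesUpToOn s
  exact (H.eq_iteratedFDerivWithin_of_uniqueDiffOn (by exact_mod_cast hj) hs hx).symm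

lemma iteratedDeriv_slice {E : Type*} [NormedAddCommGroup E] [NormedSpace ℝ E]
    {G : ℝ × E → ℝ} {N : ℕ} (hG : ContDiff ℝ (N : ℕ∞) G) (x₀ : E) {j : ℕ} (hj : j ≤ N) :
    ∀ t : ℝ, iteratedDeriv j (fun s => G (s, x₀)) t
      = iteratedFDeriv ℝ j G (t, x₀) (fun _ => ((1 : ℝ), (0 : E))) := by
  induction j with
  | zero => intro t; simp [iteratedFDeriv_zero_apply]
  | succ j IH =>
    intro t
    have hjN : j ≤ N := Nat.le_of_succ_le hj
    have hdiff : Differentiable ℝ (iteratedFDeriv ℝ j G) :=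
      hG.differentiable_iteratedFDeriv (by exact_mod_cast hj)
    have h2 : HasDerivAt (fun s : ℝ => (s, x₀)) ((1 : ℝ), (0 : E)) t :=
      (hasDerivAt_id t).prodMk (hasDerivAt_const t x₀)
    have h3 : HasDerivAt (fun s : ℝ => iteratedFDeriv ℝ j G (s, x₀))
        (fderiv ℝ (iteratedFDeriv ℝ j G) (t, x₀) ((1 : ℝ), (0 : E))) t :=
      (hdiff (t, x₀)).hasFDerivAt.comp_hasDerivAt t h2
    have h4 : HasDerivAt (fun s : ℝ => iteratedFDeriv ℝ j G (s, x₀) (fun _ => ((1:ℝ), (0:E))))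
        ((fderiv ℝ (iteratedFDeriv ℝ j G) (t, x₀) ((1 : ℝ), (0 : E)))
          (fun _ => ((1:ℝ), (0:E)))) t :=
      ((ContinuousMultilinearMap.apply ℝ (fun _ : Fin j => ℝ × E) ℝ
        (fun _ => ((1:ℝ), (0:E)))).hasFDerivAt.comp_hasDerivAt t h3)
    rw [iteratedDeriv_succ]
    have : iteratedDeriv j (fun s => G (s, x₀)) = fun s =>
        iteratedFDeriv ℝ j G (s, x₀) (fun _ => ((1:ℝ), (0:E))) := funext (IH hjN)
    rw [this, h4.deriv, iteratedFDeriv_succ_apply_left]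
    rfl


/-- Higher-order derivative test via indicative families: if `f(x(t;x₀))` vanishes below
order `2k` and has positive `2k`-th derivative for all parameters `x₀` in a compact set,
and the family initially covers a neighborhood of the origin, then `f(x) ≥ c‖x‖^{2k}` near
the origin; in particular the origin is a strict local minimum. -/
theorem indicative_family_strict_min (n m k : ℕ) (hk : 1 ≤ k)
    (f : EuclideanSpace ℝ (Fin n) → ℝ)
    (hf : ContDiff ℝ (2 * k + 1 : ℕ) f) (hf0 : f 0 = 0)
    (hcrit : fderiv ℝ f 0 = 0)
    (S : Set (EuclideanSpace ℝ (Fin m))) (hS : IsCompact S)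
    (ε : ℝ) (hε : 0 < ε)
    (X : ℝ → EuclideanSpace ℝ (Fin m) → EuclideanSpace ℝ (Fin n))
    (hX : ContDiff ℝ (2 * k + 1 : ℕ) (Function.uncurry X))
    (hX0 : ∀ x₀ ∈ S, X 0 x₀ = 0)
    (hcover : ∀ δ, 0 < δ → δ ≤ ε →
      ∃ U ∈ nhds (0 : EuclideanSpace ℝ (Fin n)), ∀ x ∈ U,
        ∃ x₀ ∈ S, ∃ t ∈ Set.Icc (0 : ℝ) δ, x = X t x₀)
    (hvan : ∀ x₀ ∈ S, ∀ i < 2 * k, iteratedDeriv i (fun t => f (X t x₀)) 0 = 0)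
    (hpos : ∀ x₀ ∈ S, 0 < iteratedDeriv (2 * k) (fun t => f (X t x₀)) 0) :
    ∃ c > (0 : ℝ), ∃ U ∈ nhds (0 : EuclideanSpace ℝ (Fin n)),
      (∀ x ∈ U, c * ‖x‖ ^ (2 * k) ≤ f x) ∧ ∀ x ∈ U, x ≠ 0 → 0 < f x := by
  classical
  set G : ℝ × EuclideanSpace ℝ (Fin m) → ℝ := fun p => f (X p.1 p.2) with hGdef
  have hG : ContDiff ℝ ((2 * k + 1 : ℕ) : ℕ∞) G := by
    have := hf.comp hX
    exact_mod_cast this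
  have hXC : ContDiff ℝ ((2 * k + 1 : ℕ) : ℕ∞) (Function.uncurry X) := by exact_mod_cast hX
  have hφC : ∀ x₀ : EuclideanSpace ℝ (Fin m), ContDiff ℝ ((2 * k + 1 : ℕ) : ℕ∞) (fun t => f (X t x₀)) :=
    fun x₀ => hG.comp (contDiff_id.prodMk contDiff_const)
  -- S is nonempty
  obtain ⟨U₀, hU₀, hU₀cov⟩ := hcover ε hε le_rfl
  obtain ⟨z₀, hz₀S, -⟩ := hU₀cov 0 (mem_of_mem_nhds hU₀)
  have hSne : S.Nonempty := ⟨z₀, hz₀S⟩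
  -- the 2k-th coefficient function, continuous, with positive minimum a₀ on S
  set v : ℝ × EuclideanSpace ℝ (Fin m) := ((1 : ℝ), (0 : EuclideanSpace ℝ (Fin m))) with hv
  set a : EuclideanSpace ℝ (Fin m) → ℝ := fun x₀ => iteratedFDeriv ℝ (2 * k) G (0, x₀) (fun _ => v) with ha
  have key : ∀ x₀ : EuclideanSpace ℝ (Fin m), iteratedDeriv (2 * k) (fun t => f (X t x₀)) 0 = a x₀ :=
    fun x₀ => iteratedDeriv_slice hG x₀ (Nat.le_succ _) 0
  have cont_a : Continuous a :=
    (ContinuousMultilinearMap.apply ℝ (fun _ : Fin (2 * k) => ℝ × EuclideanSpace ℝ (Fin m)) ℝ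
      (fun _ => v)).continuous.comp
      ((hG.continuous_iteratedFDeriv (Nat.cast_le.mpr (Nat.le_succ (2*k)))).comp
        (continuous_const.prodMk continuous_id))
  obtain ⟨y₀, hy₀S, hy₀min⟩ := hS.exists_isMinOn hSne cont_a.continuousOn
  set a₀ : ℝ := a y₀ with ha₀
  have ha₀pos : 0 < a₀ := by rw [ha₀, ← key y₀]; exact hpos y₀ hy₀S
  have ha₀le : ∀ x₀ ∈ S, a₀ ≤ a x₀ := fun x₀ hx₀ => hy₀min hx₀
  -- uniform bounds on the compact cylinder
  have hKcomp : IsCompact (Icc (0:ℝ) ε ×ˢ S) := isCompact_Icc.prod hS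
  obtain ⟨C, hC⟩ := hKcomp.exists_bound_of_continuousOn
    (hG.continuous_iteratedFDeriv (le_refl _)).continuousOn
  obtain ⟨A, hA⟩ := hKcomp.exists_bound_of_continuousOn
    (hXC.continuous_fderiv (by simp)).continuousOn
  set C' : ℝ := max C 1 with hC'
  set A' : ℝ := max A 1 with hA'
  have hC'pos : (0:ℝ) < C' := lt_of_lt_of_le one_pos (le_max_right _ _)
  have hA'pos : (0:ℝ) < A' := lt_of_lt_of_le one_pos (le_max_right _ _)
  have hvnorm : ‖v‖ = 1 := by rw [hv, Prod.norm_def]; simp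
  -- uniform speed bound for the trajectories
  have hXbnd : ∀ x₀ ∈ S, ∀ t ∈ Icc (0:ℝ) ε, ‖X t x₀‖ ≤ A' * t := by
    intro x₀ hx₀ t ht
    have hder : ∀ s ∈ Icc (0:ℝ) ε, HasDerivWithinAt (fun s => X s x₀)
        (fderiv ℝ (Function.uncurry X) (s, x₀) v) (Icc (0:ℝ) ε) s := by
      intro s _
      have h2 : HasDerivAt (fun s : ℝ => (s, x₀)) v s :=
        (hasDerivAt_id s).prodMk (hasDerivAt_const s x₀)
      exact (((hXC.differentiable (by simp)) (s, x₀)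
        ).hasFDerivAt.comp_hasDerivAt s h2).hasDerivWithinAt
    have hbnd : ∀ s ∈ Ico (0:ℝ) ε, ‖fderiv ℝ (Function.uncurry X) (s, x₀) v‖ ≤ A' := by
      intro s hs
      calc ‖fderiv ℝ (Function.uncurry X) (s, x₀) v‖
          ≤ ‖fderiv ℝ (Function.uncurry X) (s, x₀)‖ * ‖v‖ :=
            ContinuousLinearMap.le_opNorm _ _
        _ = ‖fderiv ℝ (Function.uncurry X) (s, x₀)‖ := by rw [hvnorm, mul_one]
        _ ≤ A := hA (s, x₀) ⟨Ico_subset_Icc_self hs, hx₀⟩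
        _ ≤ A' := le_max_left _ _
    have := norm_image_sub_le_of_norm_deriv_le_segment' hder hbnd t ht
    rwa [hX0 x₀ hx₀, sub_zero, sub_zero] at this
  -- main Taylor estimate
  have hQpos : (0:ℝ) < ((2*k).factorial : ℝ) := by positivity
  have hPpos : (0:ℝ) < ((2*k+1).factorial : ℝ) := by positivity
  set c₁ : ℝ := a₀ / (2 * ((2*k).factorial : ℝ)) with hc₁
  have hc₁pos : 0 < c₁ := by positivity
  set δ₁ : ℝ := a₀ * ((2*k+1).factorial : ℝ) / (2 * ((2*k).factorial : ℝ) * C') with hδ₁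
  have hδ₁pos : 0 < δ₁ := by positivity
  set δ : ℝ := min ε δ₁ with hδ
  have hδpos : 0 < δ := lt_min hε hδ₁pos
  have hmain : ∀ x₀ ∈ S, ∀ t : ℝ, 0 < t → t ≤ δ → c₁ * t ^ (2*k) ≤ f (X t x₀) := by
    intro x₀ hx₀ t ht0 htδ
    have htε : t ≤ ε := le_trans htδ (min_le_left _ _)
    have htδ₁ : t ≤ δ₁ := le_trans htδ (min_le_right _ _)
    have hφ := hφC x₀
    have hu : UniqueDiffOn ℝ (Icc (0:ℝ) t) := uniqueDiffOn_Icc ht0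
    have hEq : ∀ j ≤ 2*k+1, ∀ y ∈ Icc (0:ℝ) t,
        iteratedDerivWithin j (fun s => f (X s x₀)) (Icc (0:ℝ) t) y
          = iteratedDeriv j (fun s => f (X s x₀)) y :=
      fun j hj y hy => iteratedDerivWithin_eq_iteratedDeriv' hφ hu hy hj
    have hcd : ContDiffOn ℝ ((2*k : ℕ)) (fun s => f (X s x₀)) (Icc (0:ℝ) t) :=
      (hφ.of_le (Nat.cast_le.mpr (Nat.le_succ (2*k)))).contDiffOn
    have hdiffall : Differentiable ℝ (iteratedDeriv (2*k) (fun s => f (X s x₀))) :=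
      hφ.differentiable_iteratedDeriv (2*k) (Nat.cast_lt.mpr (Nat.lt_succ_self (2*k)))
    have hdiffOn : DifferentiableOn ℝ
        (iteratedDerivWithin (2*k) (fun s => f (X s x₀)) (Icc (0:ℝ) t)) (Ioo (0:ℝ) t) :=
      (hdiffall.differentiableOn).congr
        (fun y hy => hEq (2*k) (Nat.le_succ _) y (Ioo_subset_Icc_self hy))
    obtain ⟨x', hx', hTay⟩ := taylor_mean_remainder_lagrange ht0.ne
      (by rw [uIcc_of_le ht0.le]; exact hcd)
      (by rw [uIcc_of_le ht0.le, uIoo_of_le ht0.le]; exact hdiffOn)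
    rw [uIoo_of_le ht0.le] at hx'
    rw [uIcc_of_le ht0.le] at hTay
    set R : ℝ := iteratedDerivWithin (2*k+1) (fun s => f (X s x₀)) (Icc (0:ℝ) t) x' with hR
    have hsum : taylorWithinEval (fun s => f (X s x₀)) (2*k) (Icc (0:ℝ) t) 0 t
        = (((2*k).factorial : ℝ))⁻¹ * t ^ (2*k) * a x₀ := by
      rw [taylor_within_apply, Finset.sum_range_succ]
      have h0 : ∀ i ∈ Finset.range (2*k),
          (((i.factorial : ℝ))⁻¹ * (t - 0) ^ i) •
            iteratedDerivWithin i (fun s => f (X s x₀)) (Icc (0:ℝ) t) 0 = 0 := by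
        intro i hi
        rw [hEq i (Nat.le_succ_of_le (le_of_lt (Finset.mem_range.mp hi))) 0 (left_mem_Icc.mpr ht0.le),
          hvan x₀ hx₀ i (Finset.mem_range.mp hi), smul_zero]
      rw [Finset.sum_eq_zero h0, zero_add,
        hEq (2*k) (Nat.le_succ _) 0 (left_mem_Icc.mpr ht0.le), key x₀]
      rw [smul_eq_mul, sub_zero]
    have hRbnd : |R| ≤ C' := by
      rw [hR, hEq (2*k+1) le_rfl x' (Ioo_subset_Icc_self hx'),
        iteratedDeriv_slice hG x₀ le_rfl x']
      have hmem : (x', x₀) ∈ Icc (0:ℝ) ε ×ˢ S :=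
        ⟨⟨hx'.1.le, le_trans hx'.2.le htε⟩, hx₀⟩
      calc |iteratedFDeriv ℝ (2*k+1) G (x', x₀) (fun _ => v)|
          ≤ ‖iteratedFDeriv ℝ (2*k+1) G (x', x₀)‖ * ∏ _i : Fin (2*k+1), ‖v‖ :=
            (iteratedFDeriv ℝ (2*k+1) G (x', x₀)).le_opNorm _
        _ = ‖iteratedFDeriv ℝ (2*k+1) G (x', x₀)‖ := by
            rw [hvnorm]; simp
        _ ≤ C := hC (x', x₀) hmem
        _ ≤ C' := le_max_left _ _
    -- arithmetic
    have hT : (0:ℝ) ≤ t ^ (2*k) := pow_nonneg ht0.le _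
    have h2 : C' * t / ((2*k+1).factorial : ℝ) ≤ a₀ / (2 * ((2*k).factorial : ℝ)) := by
      calc C' * t / ((2*k+1).factorial : ℝ)
          ≤ C' * (a₀ * ((2*k+1).factorial : ℝ) / (2 * ((2*k).factorial : ℝ) * C')) / ((2*k+1).factorial : ℝ) := by
            gcongr
        _ = a₀ / (2 * ((2*k).factorial : ℝ)) := by field_simp
    have hstep : -(a₀ / (2 * ((2*k).factorial : ℝ)) * t ^ (2*k)) ≤ R * t ^ (2*k+1) / ((2*k+1).factorial : ℝ) := by
      have hR1 : -C' ≤ R := (abs_le.mp hRbnd).1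
      have htp : (0:ℝ) ≤ t / ((2*k+1).factorial : ℝ) := by positivity
      have hmul : -C' * (t / ((2*k+1).factorial : ℝ)) ≤ R * (t / ((2*k+1).factorial : ℝ)) :=
        mul_le_mul_of_nonneg_right hR1 htp
      have hre : R * t ^ (2*k+1) / ((2*k+1).factorial : ℝ) = (R * (t / ((2*k+1).factorial : ℝ))) * t ^ (2*k) := by
        rw [pow_succ]; ring
      have := mul_le_mul_of_nonneg_right hmul hT
      rw [hre]
      calc -(a₀ / (2 * ((2*k).factorial : ℝ)) * t ^ (2*k))
          ≤ -C' * (t / ((2*k+1).factorial : ℝ)) * t ^ (2*k) := by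
            have h2' : C' * (t / ((2*k+1).factorial : ℝ)) ≤ a₀ / (2 * ((2*k).factorial : ℝ)) := by
              rw [mul_div_assoc] at h2; exact h2
            have h3 := mul_le_mul_of_nonneg_right h2' hT
            rw [neg_mul, neg_mul]
            exact neg_le_neg h3
        _ ≤ R * (t / ((2*k+1).factorial : ℝ)) * t ^ (2*k) := this
    have haxle : (((2*k).factorial : ℝ))⁻¹ * t ^ (2*k) * a₀ ≤ (((2*k).factorial : ℝ))⁻¹ * t ^ (2*k) * a x₀ := by
      have : (0:ℝ) ≤ (((2*k).factorial : ℝ))⁻¹ * t ^ (2*k) := by positivity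
      exact mul_le_mul_of_nonneg_left (ha₀le x₀ hx₀) this
    have hceq : c₁ * t ^ (2*k)
        = (((2*k).factorial : ℝ))⁻¹ * t ^ (2*k) * a₀ - a₀ / (2 * ((2*k).factorial : ℝ)) * t ^ (2*k) := by
      rw [hc₁]; field_simp; ring
    have hTay' : f (X t x₀)
        = (((2*k).factorial : ℝ))⁻¹ * t ^ (2*k) * a x₀ + R * t ^ (2*k+1) / ((2*k+1).factorial : ℝ) := by
      have := hTay
      rw [hsum, sub_zero] at this
      linarith [this]
    rw [hTay']
    linarith [hstep, haxle]
  -- assemble the conclusion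
  obtain ⟨U, hU, hUcov⟩ := hcover δ hδpos (min_le_left _ _)
  refine ⟨c₁ / A' ^ (2*k), by positivity, U, hU, ?_, ?_⟩
  · intro x hx
    obtain ⟨x₀, hx₀S, t, ht, hxeq⟩ := hUcov x hx
    rcases eq_or_lt_of_le ht.1 with h0 | h0
    · rw [hxeq, ← h0, hX0 x₀ hx₀S]
      simp [hf0, zero_pow (by omega : 2*k ≠ 0)]
    · have h1 := hmain x₀ hx₀S t h0 ht.2
      have h2 : ‖x‖ ≤ A' * t := by
        rw [hxeq]
        exact hXbnd x₀ hx₀S t ⟨ht.1, le_trans ht.2 (min_le_left _ _)⟩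
      calc c₁ / A' ^ (2*k) * ‖x‖ ^ (2*k)
          ≤ c₁ / A' ^ (2*k) * (A' * t) ^ (2*k) := by gcongr
        _ = c₁ * t ^ (2*k) := by
            rw [mul_pow]; field_simp
        _ ≤ f (X t x₀) := h1
        _ = f x := by rw [hxeq]
  · intro x hx hxne
    obtain ⟨x₀, hx₀S, t, ht, hxeq⟩ := hUcov x hx
    rcases eq_or_lt_of_le ht.1 with h0 | h0
    · exact absurd (by rw [hxeq, ← h0, hX0 x₀ hx₀S]) hxne
    · have h1 := hmain x₀ hx₀S t h0 ht.2
      have : (0:ℝ) < c₁ * t ^ (2*k) := by positivity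
      rw [hxeq]
      linarith
end

section
/- Let (G,p) be a pinned framework with no zero-length edges and E a stiff-bar energy at p. A configuration vector p' lies in the kernel of the Hessian of E at p if and only if for every edge ij of G, (p_i − p_j)·(p'_i − p'_j) = 0 (i.e., p' is a first-order flex of (G,p)). -/
/-- Derivative of the norm in a real inner product space at a nonzero point. -/
theorem hasFDerivAt_norm_aux {E : Type*} [NormedAddCommGroup E] [InnerProductSpace ℝ E]
    {x : E} (hx : x ≠ 0) :
    HasFDerivAt (fun y : E => ‖y‖) (‖x‖⁻¹ • innerSL ℝ x) x := by
  have h0 : ‖x‖ ≠ 0 := norm_ne_zero_iff.mpr hx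
  have h1 : HasFDerivAt (fun y : E => ‖y‖ ^ 2) (2 • innerSL ℝ x) x := by
    simpa using (hasFDerivAt_id x).norm_sq
  have h2 := h1.sqrt (pow_ne_zero 2 h0)
  have h3 : (fun y : E => Real.sqrt (‖y‖ ^ 2)) = fun y : E => ‖y‖ := by
    funext y; exact Real.sqrt_sq (norm_nonneg y)
  rw [h3] at h2
  convert h2 using 1
  rw [Real.sqrt_sq (norm_nonneg x)]
  ext y
  simp only [ContinuousLinearMap.smul_apply, smul_eq_mul, nsmul_eq_mul]
  field_simp
  ring

set_option maxHeartbeats 2000000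

/-- For a stiff-bar energy `E` at `p`, a vector `p'` lies in the kernel of the Hessian of
`E` at `p` iff `p'` is a first-order flex of the framework, i.e.
`(pᵢ - pⱼ)·(p'ᵢ - p'ⱼ) = 0` on every edge. -/
theorem hessian_kernel_eq_flexes (n d : ℕ) (edges : Finset (Fin n × Fin n))
    (p : Fin n → EuclideanSpace ℝ (Fin d))
    (hnz : ∀ e ∈ edges, p e.1 ≠ p e.2)
    (Eij : Fin n × Fin n → ℝ → ℝ)
    (hE : ∀ e ∈ edges, AnalyticAt ℝ (Eij e) (dist (p e.1) (p e.2)))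
    (hE1 : ∀ e ∈ edges, deriv (Eij e) (dist (p e.1) (p e.2)) = 0)
    (hE2 : ∀ e ∈ edges, 0 < iteratedDeriv 2 (Eij e) (dist (p e.1) (p e.2)))
    (p' : Fin n → EuclideanSpace ℝ (Fin d)) :
    (∀ w : Fin n → EuclideanSpace ℝ (Fin d),
        iteratedFDeriv ℝ 2
          (fun q : Fin n → EuclideanSpace ℝ (Fin d) =>
            ∑ e ∈ edges, Eij e (dist (q e.1) (q e.2))) p ![p', w] = 0) ↔
      ∀ e ∈ edges, (inner ℝ (p e.1 - p e.2) (p' e.1 - p' e.2) : ℝ) = 0 := by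
  classical
  set f : (Fin n → EuclideanSpace ℝ (Fin d)) → ℝ := fun q => ∑ e ∈ edges, Eij e (dist (q e.1) (q e.2)) with hf
  set L : Fin n × Fin n → ((Fin n → EuclideanSpace ℝ (Fin d)) →L[ℝ] EuclideanSpace ℝ (Fin d)) :=
    fun e => (ContinuousLinearMap.proj (R := ℝ) (φ := fun _ : Fin n => EuclideanSpace ℝ (Fin d)) e.1) -
      (ContinuousLinearMap.proj (R := ℝ) (φ := fun _ : Fin n => EuclideanSpace ℝ (Fin d)) e.2) with hLdef
  have hLapp : ∀ e (q : Fin n → EuclideanSpace ℝ (Fin d)), L e q = q e.1 - q e.2 := by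
    intro e q
    simp [hLdef, ContinuousLinearMap.sub_apply, ContinuousLinearMap.proj_apply]
  have hdist : ∀ e (q : Fin n → EuclideanSpace ℝ (Fin d)), dist (q e.1) (q e.2) = ‖L e q‖ := by
    intro e q; rw [hLapp, dist_eq_norm]
  -- abbreviations
  set A : Fin n × Fin n → (Fin n → EuclideanSpace ℝ (Fin d)) →
      ((Fin n → EuclideanSpace ℝ (Fin d)) →L[ℝ] ℝ) :=
    fun e q => (innerSL ℝ (L e q)).comp (L e) with hAdef
  set c : Fin n × Fin n → (Fin n → EuclideanSpace ℝ (Fin d)) → ℝ :=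
    fun e q => deriv (Eij e) ‖L e q‖ * (‖L e q‖)⁻¹ with hcdef
  set G : (Fin n → EuclideanSpace ℝ (Fin d)) → ((Fin n → EuclideanSpace ℝ (Fin d)) →L[ℝ] ℝ) :=
    fun q => ∑ e ∈ edges, c e q • A e q with hGdef
  -- nonvanishing at p
  have hLp : ∀ e ∈ edges, L e p ≠ 0 := by
    intro e he; rw [hLapp]; exact sub_ne_zero.mpr (hnz e he)
  have hdpos : ∀ e ∈ edges, (0:ℝ) < ‖L e p‖ := by
    intro e he; exact norm_pos_iff.mpr (hLp e he)
  -- eventual good behaviour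
  have hev : ∀ᶠ q in nhds p, ∀ e ∈ edges, AnalyticAt ℝ (Eij e) ‖L e q‖ ∧ L e q ≠ 0 := by
    rw [Filter.eventually_all_finset]
    intro e he
    have hcont : ContinuousAt (fun q : Fin n → EuclideanSpace ℝ (Fin d) => ‖L e q‖) p := ((L e).continuous.norm).continuousAt
    have h1 : ∀ᶠ q in nhds p, AnalyticAt ℝ (Eij e) ‖L e q‖ := by
      have h2 := (hE e he).eventually_analyticAt
      rw [hdist e p] at h2
      exact hcont.eventually h2
    have h2 : ∀ᶠ q in nhds p, L e q ≠ 0 :=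
      ((L e).continuous.continuousAt).eventually_ne (hLp e he)
    exact h1.and h2
  -- first derivative formula near p
  have hfd : ∀ᶠ q in nhds p, HasFDerivAt f (G q) q := by
    refine hev.mono fun q hq => ?_
    rw [hf, hGdef]
    have : ∀ e ∈ edges,
        HasFDerivAt (fun q' : Fin n → EuclideanSpace ℝ (Fin d) => Eij e (dist (q' e.1) (q' e.2))) (c e q • A e q) q := by
      intro e he
      obtain ⟨han, hne⟩ := hq e he
      have hnorm : HasFDerivAt (fun q' : Fin n → EuclideanSpace ℝ (Fin d) => ‖L e q'‖)
          ((‖L e q‖)⁻¹ • (innerSL ℝ (L e q)).comp (L e)) q := by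
        have := (hasFDerivAt_norm_aux hne).comp q (L e).hasFDerivAt
        simpa [ContinuousLinearMap.smul_comp, Function.comp_def] using this
      have hE' : HasDerivAt (Eij e) (deriv (Eij e) ‖L e q‖) ‖L e q‖ :=
        han.differentiableAt.hasDerivAt
      have hcomp := hE'.comp_hasFDerivAt q hnorm
      have heq : (fun q' : Fin n → EuclideanSpace ℝ (Fin d) => Eij e (dist (q' e.1) (q' e.2)))
          = fun q' : Fin n → EuclideanSpace ℝ (Fin d) => Eij e ‖L e q'‖ := by
        funext q'; rw [hdist]
      rw [heq]
      have : c e q • A e q = deriv (Eij e) ‖L e q‖ •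
          ((‖L e q‖)⁻¹ • (innerSL ℝ (L e q)).comp (L e)) := by
        rw [hcdef, hAdef, smul_smul]
      rw [this]
      exact hcomp
    exact HasFDerivAt.fun_sum this
  -- second derivative of each Eij
  have hdd : ∀ e ∈ edges, HasDerivAt (deriv (Eij e))
      (iteratedDeriv 2 (Eij e) ‖L e p‖) ‖L e p‖ := by
    intro e he
    have h1 : AnalyticAt ℝ (fderiv ℝ (Eij e)) (dist (p e.1) (p e.2)) := (hE e he).fderiv
    have h3 : AnalyticAt ℝ (fun s => fderiv ℝ (Eij e) s 1) (dist (p e.1) (p e.2)) := by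
      have := ((ContinuousLinearMap.apply ℝ ℝ (1:ℝ)).analyticAt
        (fderiv ℝ (Eij e) (dist (p e.1) (p e.2)))).comp h1
      simpa [Function.comp_def, ContinuousLinearMap.apply_apply] using this
    have h4 : (fun s => fderiv ℝ (Eij e) s 1) = deriv (Eij e) :=
      funext fun s => fderiv_apply_one_eq_deriv
    rw [h4] at h3
    have h5 := h3.differentiableAt.hasDerivAt
    have h6 : iteratedDeriv 2 (Eij e) = deriv (deriv (Eij e)) := by
      rw [show (2:ℕ) = 1 + 1 from rfl, iteratedDeriv_succ, iteratedDeriv_one]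
    rw [h6, hdist e p] at *
    exact h5
  -- derivative of c e at p
  set c' : Fin n × Fin n → ((Fin n → EuclideanSpace ℝ (Fin d)) →L[ℝ] ℝ) := fun e =>
    (iteratedDeriv 2 (Eij e) ‖L e p‖ * ((‖L e p‖)⁻¹ * (‖L e p‖)⁻¹)) •
      ((innerSL ℝ (L e p)).comp (L e)) with hc'def
  have hcp : ∀ e ∈ edges, c e p = 0 := by
    intro e he
    rw [hcdef]
    have := hE1 e he
    rw [hdist e p] at this
    simp [this]
  have hc' : ∀ e ∈ edges, HasFDerivAt (c e) (c' e) p := by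
    intro e he
    have hd0 : ‖L e p‖ ≠ 0 := (hdpos e he).ne'
    have hr : HasFDerivAt (fun q : Fin n → EuclideanSpace ℝ (Fin d) => ‖L e q‖)
        ((‖L e p‖)⁻¹ • (innerSL ℝ (L e p)).comp (L e)) p := by
      have := (hasFDerivAt_norm_aux (hLp e he)).comp p (L e).hasFDerivAt
      simpa [ContinuousLinearMap.smul_comp, Function.comp_def] using this
    have hh : HasDerivAt (fun s : ℝ => deriv (Eij e) s * s⁻¹)
        (iteratedDeriv 2 (Eij e) ‖L e p‖ * (‖L e p‖)⁻¹) ‖L e p‖ := by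
      have h1 := (hdd e he).mul (hasDerivAt_inv hd0)
      have h2 := hE1 e he
      rw [hdist e p] at h2
      rw [h2] at h1
      simp only [zero_mul, add_zero] at h1
      exact h1
    have hcomp := hh.comp_hasFDerivAt p hr
    have : c' e = (iteratedDeriv 2 (Eij e) ‖L e p‖ * (‖L e p‖)⁻¹) •
        ((‖L e p‖)⁻¹ • (innerSL ℝ (L e p)).comp (L e)) := by
      rw [hc'def, smul_smul, mul_assoc]
    rw [this]
    exact hcomp
  -- differentiability of A e
  have hAdiff : ∀ e, ∃ D : (Fin n → EuclideanSpace ℝ (Fin d)) →L[ℝ]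
      ((Fin n → EuclideanSpace ℝ (Fin d)) →L[ℝ] ℝ), HasFDerivAt (A e) D p := by
    intro e
    have hblm : IsBoundedLinearMap ℝ (A e) := by
      refine ⟨⟨fun x y => ?_, fun m x => ?_⟩, ‖L e‖ * ‖L e‖ + 1, by positivity, fun x => ?_⟩
      · ext z
        simp [hAdef, inner_add_left]
      · ext z
        simp [hAdef, real_inner_smul_left]
      · have h1 : ‖A e x‖ ≤ ‖innerSL ℝ (L e x)‖ * ‖L e‖ := ContinuousLinearMap.opNorm_comp_le _ _
        have h2 : ‖innerSL ℝ (L e x)‖ = ‖L e x‖ := innerSL_apply_norm ℝ _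
        have h3 : ‖L e x‖ ≤ ‖L e‖ * ‖x‖ := (L e).le_opNorm x
        have h4 : (0:ℝ) ≤ ‖L e‖ := norm_nonneg _
        have h5 : (0:ℝ) ≤ ‖x‖ := norm_nonneg _
        calc ‖A e x‖ ≤ ‖L e x‖ * ‖L e‖ := by rw [← h2]; exact h1
          _ ≤ (‖L e‖ * ‖x‖) * ‖L e‖ := by nlinarith
          _ ≤ (‖L e‖ * ‖L e‖ + 1) * ‖x‖ := by nlinarith
    exact ⟨_, hblm.hasFDerivAt⟩
  -- derivative of G at p
  set G' : (Fin n → EuclideanSpace ℝ (Fin d)) →L[ℝ]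
      ((Fin n → EuclideanSpace ℝ (Fin d)) →L[ℝ] ℝ) :=
    ∑ e ∈ edges, (c' e).smulRight (A e p) with hG'def
  have hG : HasFDerivAt G G' p := by
    rw [hGdef, hG'def]
    refine HasFDerivAt.fun_sum fun e he => ?_
    obtain ⟨D, hD⟩ := hAdiff e
    have := (hc' e he).smul hD
    rw [hcp e he] at this
    simp only [zero_smul, zero_add] at this
    exact this
  -- key formula
  have hkey : ∀ v w : Fin n → EuclideanSpace ℝ (Fin d), iteratedFDeriv ℝ 2 f p ![v, w] =
      ∑ e ∈ edges, (iteratedDeriv 2 (Eij e) (dist (p e.1) (p e.2)) *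
        ((dist (p e.1) (p e.2))⁻¹ * (dist (p e.1) (p e.2))⁻¹) *
        (inner ℝ (p e.1 - p e.2) (v e.1 - v e.2) : ℝ)) *
        (inner ℝ (p e.1 - p e.2) (w e.1 - w e.2) : ℝ) := by
    intro v w
    rw [iteratedFDeriv_two_apply]
    have h2 : fderiv ℝ f =ᶠ[nhds p] G := hfd.mono fun q hq => hq.fderiv
    rw [h2.fderiv_eq, hG.fderiv]
    rw [hG'def]
    simp only [ContinuousLinearMap.coe_sum', Finset.sum_apply,
      ContinuousLinearMap.smulRight_apply, ContinuousLinearMap.coe_smul', Pi.smul_apply,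
      Matrix.cons_val_zero, Matrix.cons_val_one, Matrix.head_cons, ContinuousLinearMap.smul_apply,
      smul_eq_mul]
    refine Finset.sum_congr rfl fun e he => ?_
    rw [hc'def, hAdef]
    simp only [ContinuousLinearMap.smul_apply, ContinuousLinearMap.comp_apply,
      innerSL_apply_apply, smul_eq_mul]
    rw [hLapp e p, hLapp e v, hLapp e w, hdist e p, hLapp e p]
  -- conclude
  constructor
  · intro h e he
    have h0 := h p'
    rw [hf] at hkey
    rw [hkey p' p'] at h0
    have hnonneg : ∀ e ∈ edges, (0:ℝ) ≤ (iteratedDeriv 2 (Eij e) (dist (p e.1) (p e.2)) *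
        ((dist (p e.1) (p e.2))⁻¹ * (dist (p e.1) (p e.2))⁻¹) *
        (inner ℝ (p e.1 - p e.2) (p' e.1 - p' e.2) : ℝ)) *
        (inner ℝ (p e.1 - p e.2) (p' e.1 - p' e.2) : ℝ) := by
      intro e' he'
      have hk : (0:ℝ) < iteratedDeriv 2 (Eij e') (dist (p e'.1) (p e'.2)) *
          ((dist (p e'.1) (p e'.2))⁻¹ * (dist (p e'.1) (p e'.2))⁻¹) := by
        have hd : (0:ℝ) < dist (p e'.1) (p e'.2) := dist_pos.mpr (hnz e' he')
        have := hE2 e' he'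
        positivity
      rw [mul_assoc]
      exact mul_nonneg hk.le (mul_self_nonneg _)
    have h1 := (Finset.sum_eq_zero_iff_of_nonneg hnonneg).mp h0 e he
    have hk : (0:ℝ) < iteratedDeriv 2 (Eij e) (dist (p e.1) (p e.2)) *
        ((dist (p e.1) (p e.2))⁻¹ * (dist (p e.1) (p e.2))⁻¹) := by
      have hd : (0:ℝ) < dist (p e.1) (p e.2) := dist_pos.mpr (hnz e he)
      have := hE2 e he
      positivity
    rw [mul_assoc] at h1
    have h2 := (mul_eq_zero.mp h1).resolve_left hk.ne'
    exact mul_self_eq_zero.mp h2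
  · intro h w
    rw [hf] at hkey
    rw [hkey p' w]
    refine Finset.sum_eq_zero fun e he => ?_
    rw [h e he, mul_zero, zero_mul]
end

section
/- Let A be a d×d skew-symmetric real matrix, and let p₁ = 0, p₂, ..., p_{ℓ+1} ∈ ℝᵈ be affinely independent points with p_i in the span of the first i−1 standard basis vectors for 2 ≤ i ≤ ℓ+1. Suppose that for each 2 ≤ i ≤ ℓ+1, the vector A·p_i also lies in the span of the first i−1 standard basis vectors. Then the first ℓ columns (and first ℓ rows) of A are zero; in particular, A·p_i = 0 for all i. -/
/-- Key linear-algebra step for pinned trivial flexes: if `A` is skew-symmetric, the points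
`q 0 = 0, q 1, …, q ℓ` are affinely independent with `q i` supported on the first `i`
coordinates, and each `A · q i` is also supported on the first `i` coordinates, then the
first `ℓ` columns (and rows) of `A` vanish; in particular `A · q i = 0` for all `i`. -/
theorem skew_pinned_columns_zero (d ℓ : ℕ)
    (A : Matrix (Fin d) (Fin d) ℝ) (hA : A.transpose = -A)
    (q : Fin (ℓ + 1) → Fin d → ℝ)
    (hq0 : q 0 = 0)
    (haff : AffineIndependent ℝ q)
    (hspan : ∀ i : Fin (ℓ + 1), ∀ j : Fin d, (i : ℕ) ≤ (j : ℕ) → q i j = 0)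
    (hAspan : ∀ i : Fin (ℓ + 1), ∀ j : Fin d, (i : ℕ) ≤ (j : ℕ) → A.mulVec (q i) j = 0) :
    (∀ i j : Fin d, (j : ℕ) < ℓ → A i j = 0) ∧
    (∀ i j : Fin d, (i : ℕ) < ℓ → A i j = 0) ∧
    ∀ i : Fin (ℓ + 1), A.mulVec (q i) = 0 := by
  have hskew : ∀ i j : Fin d, A j i = - A i j := by
    intro i j
    have := congrFun (congrFun hA i) j
    simpa [Matrix.transpose_apply] using this
  have hli : LinearIndependent ℝ (fun i : {x : Fin (ℓ+1) // x ≠ 0} => q i) := by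
    have h := (affineIndependent_iff_linearIndependent_vsub ℝ q 0).mp haff
    simpa [hq0, vsub_eq_sub, sub_zero] using h
  have col : ∀ k : ℕ, k < ℓ → ∀ i j : Fin d, (j : ℕ) = k → A i j = 0 := by
    intro k
    induction k using Nat.strong_induction_on with
    | _ k IH =>
      intro hk i j hj
      have hkd : k < d := hj ▸ j.isLt
      have hk1 : k + 1 < ℓ + 1 := by omega
      set i1 : Fin (ℓ + 1) := ⟨k + 1, hk1⟩ with hi1
      -- the key nonzero coordinate
      have hnz : q i1 j ≠ 0 := by
        intro hz
        set g : Fin (k+1) → Fin (ℓ+1) := fun t => ⟨(t : ℕ) + 1, by omega⟩ with hg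
        have hgne : ∀ t, g t ≠ 0 := by
          intro t
          intro h
          have := congrArg Fin.val h
          change (t : ℕ) + 1 = (0 : Fin (ℓ+1)).val at this
          simp at this
        have hf_li : LinearIndependent ℝ (fun t : Fin (k+1) => q (g t)) :=
          hli.comp (fun t => ⟨g t, hgne t⟩)
            (by intro a b hab; simpa [hg, Fin.ext_iff, Subtype.ext_iff] using hab)
        have hsupp : ∀ t : Fin (k+1), ∀ m : Fin d, k ≤ (m : ℕ) → q (g t) m = 0 := by
          intro t m hm
          by_cases hle : (g t : ℕ) ≤ (m : ℕ)
          · exact hspan (g t) m hle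
          · have ht : (t : ℕ) = k := by
              have := t.isLt
              simp only [hg] at hle
              omega
            have hmk : (m : ℕ) = k := by
              simp only [hg] at hle
              omega
            have e1 : g t = i1 := by
              simp [hg, hi1, Fin.ext_iff, ht]
            have e2 : m = j := Fin.ext (by omega)
            rw [e1, e2]
            exact hz
        have hπli : LinearIndependent ℝ
            (fun t : Fin (k+1) => (fun s : Fin k => q (g t) ⟨(s : ℕ), by omega⟩)) := by
          rw [Fintype.linearIndependent_iff] at hf_li ⊢
          intro c hc
          refine hf_li c ?_
          funext m
          by_cases hm : (m : ℕ) < k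
          · have := congrFun hc ⟨(m : ℕ), hm⟩
            simpa [Finset.sum_apply, Fin.eta] using this
          · simp [Finset.sum_apply, hsupp _ m (le_of_not_gt hm)]
        have hcard := hπli.fintype_card_le_finrank
        simp only [Module.finrank_fintype_fun_eq_card, Fintype.card_fin] at hcard
        omega
      -- the mulVec reduces to a single term
      have hmv : ∀ r : Fin d, A.mulVec (q i1) r = A r j * q i1 j := by
        intro r
        have : A.mulVec (q i1) r = ∑ m, A r m * q i1 m := by
          simp [Matrix.mulVec, dotProduct]
        rw [this]
        refine Finset.sum_eq_single j (fun m _ hmj => ?_) (by simp)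
        rcases lt_or_ge (m : ℕ) k with hmk | hmk
        · rw [IH (m : ℕ) hmk (by omega) r m rfl, zero_mul]
        · have : (k : ℕ) + 1 ≤ (m : ℕ) := by
            rcases eq_or_lt_of_le hmk with h | h
            · exact absurd (Fin.ext (by omega) : m = j) hmj
            · omega
          rw [hspan i1 m this, mul_zero]
      rcases lt_trichotomy (i : ℕ) k with h | h | h
      · rw [hskew j i, IH (i : ℕ) h (by omega) j i rfl, neg_zero]
      · have hij : i = j := Fin.ext (by omega)
        have := hskew j j
        rw [← hij] at this ⊢
        linarith
      · have h0 := hAspan i1 i (by simpa [hi1] using h)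
        rw [hmv i] at h0
        exact (mul_eq_zero.mp h0).resolve_right hnz
  refine ⟨fun i j hj => col (j : ℕ) hj i j rfl, fun i j hi => by
    rw [hskew j i, col (i : ℕ) hi j i rfl, neg_zero], fun i => ?_⟩
  funext r
  have : A.mulVec (q i) r = ∑ m, A r m * q i m := by
    simp [Matrix.mulVec, dotProduct]
  rw [this]
  refine Finset.sum_eq_zero fun m _ => ?_
  rcases lt_or_ge (m : ℕ) (i : ℕ) with hm | hm
  · rw [col (m : ℕ) (by omega) r m rfl, zero_mul]
  · rw [hspan i m hm, mul_zero]
end
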